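/- arXiv:2202.09327 — 6 statements merged into one kernel-verified Lean document; each statement's English description precedes it below -/
import Mathlib

section
/- Let X be a Banach space and let f : X → X be continuously (Fréchet) differentiable. Suppose that for every x ∈ X the derivative f'(x) is an invertible bounded linear operator (a continuous linear isomorphism of X onto itself) and that there is a constant M > 0 such that ‖[f'(x)]⁻¹‖ ≤ M for all x ∈ X. Then f is a bijection of X onto X and its inverse g : X → X is continuously differentiable, i.e. g(f(x)) = x and f(g(x)) = x for all x ∈ X and g ∈ C¹. -/
/-!
By the inverse function theorem `f` is a local homeomorphism which is `2M`-antilipschitz near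
every point. Consequently the segment from `f 0` to any `y` lifts through `f` to a path starting
at `0` that is Lipschitz with constant `2M‖y - f 0‖`. Indeed, let `τ` be the supremum of the
times up to which such a lift exists. Lifts are unique, so those on `[0, s]` for `s < τ` patch
together; being Lipschitz, the patched lift is Cauchy at `τ` and extends to `[0, τ]` because `X`
is complete; and local surjectivity of `f` at its endpoint extends it beyond `τ` unless `τ = 1`.
The endpoints of these lifts define a right inverse `g` of `f`, continuous by homotopy lifting
for separated local homeomorphisms. Uniqueness of lifts on the connected space `X` gives
`g ∘ f = id`, and `g` is `C¹` as the inverse of a `C¹` homeomorphism with invertible derivative.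
-/

open Set Filter Topology NNReal

theorem LipschitzOnWith.lipschitzOnWith_extendFrom {α β : Type*} [PseudoMetricSpace α]
    [MetricSpace β] [CompleteSpace β] {K : ℝ≥0} {f : α → β} {s : Set α}
    (hf : LipschitzOnWith K f s) : LipschitzOnWith K (extendFrom s f) (closure s) := by
  have hlim : ∀ x ∈ closure s, ∃ y, Tendsto f (𝓝[s] x) (𝓝 y) := fun x hx ↦
    CompleteSpace.complete <| (cauchy_nhds.mono' (mem_closure_iff_nhdsWithin_neBot.1 hx)
      inf_le_left).map_of_le hf.uniformContinuousOn inf_le_right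
  refine LipschitzOnWith.closure (continuousOn_extendFrom subset_rfl hlim) fun x hx y hy ↦ ?_
  rw [extendFrom_extends hf.continuousOn x hx, extendFrom_extends hf.continuousOn y hy]
  exact hf hx hy

theorem LipschitzOnWith.Icc_union_Icc {E : Type*} [PseudoMetricSpace E] {K : ℝ≥0}
    {f : ℝ → E} {a b c : ℝ} (hab : LipschitzOnWith K f (Icc a b))
    (hbc : LipschitzOnWith K f (Icc b c)) :
    LipschitzOnWith K f (Icc a c) := by
  refine .of_dist_le_mul fun x hx y hy ↦ ?_
  wlog hxy : x ≤ y generalizing x y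
  · rw [dist_comm, dist_comm x]; exact this y hy x hx (le_of_not_ge hxy)
  rcases le_total y b with hyb | hby
  · exact hab.dist_le_mul x ⟨hx.1, hxy.trans hyb⟩ y ⟨hy.1, hyb⟩
  rcases le_total b x with hbx | hxb
  · exact hbc.dist_le_mul x ⟨hbx, hx.2⟩ y ⟨hby, hy.2⟩
  calc dist (f x) (f y) ≤ dist (f x) (f b) + dist (f b) (f y) := dist_triangle _ _ _
    _ ≤ K * dist x b + K * dist b y := add_le_add
        (hab.dist_le_mul x ⟨hx.1, hxb⟩ b ⟨hx.1.trans hxb, le_rfl⟩)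
        (hbc.dist_le_mul b ⟨le_rfl, hby.trans hy.2⟩ y ⟨hby, hy.2⟩)
    _ = K * dist x y := by
        rw [← mul_add, dist_add_dist_of_mem_segment (segment_eq_Icc hxy ▸ ⟨hxb, hby⟩)]

theorem LipschitzOnWith.congr {α β : Type*} [PseudoEMetricSpace α] [PseudoEMetricSpace β]
    {K : ℝ≥0} {f g : α → β} {s : Set α} (hf : LipschitzOnWith K f s) (h : EqOn f g s) :
    LipschitzOnWith K g s := fun x hx y hy ↦ by
  rw [← h hx, ← h hy]; exact hf hx hy

theorem LipschitzOnWith.of_antilipschitzWith_comp {E F α : Type*} [PseudoMetricSpace E]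
    [PseudoMetricSpace F] [PseudoMetricSpace α] {K L : ℝ≥0} {p : E → F} {U : Set E}
    {z : α → E} {s : Set α} (hU : AntilipschitzWith K (U.domRestrict p)) (hzU : MapsTo z s U)
    (hpz : LipschitzOnWith L (p ∘ z) s) : LipschitzOnWith (K * L) z s := by
  refine .of_dist_le_mul fun x hx y hy ↦ ?_
  calc dist (z x) (z y) ≤ K * dist (p (z x)) (p (z y)) :=
        hU.le_mul_dist ⟨z x, hzU hx⟩ ⟨z y, hzU hy⟩
    _ ≤ K * (L * dist x y) := by gcongr; exact hpz.dist_le_mul x hx y hy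
    _ = ↑(K * L) * dist x y := by push_cast; ring

section PathLifting

variable {E F : Type*} [MetricSpace E] {p : E → F} {γ : ℝ → F} {e₀ : E}
  {C : ℝ≥0} {z : ℝ → E} {t : ℝ}

structure IsLipschitzLiftOn (p : E → F) (γ : ℝ → F) (e₀ : E) (C : ℝ≥0) (z : ℝ → E)
    (t : ℝ) : Prop where
  apply_zero : z 0 = e₀
  lifts : EqOn (p ∘ z) γ (Icc 0 t)
  lipschitzOnWith : LipschitzOnWith C z (Icc 0 t)

theorem IsLipschitzLiftOn.mono (h : IsLipschitzLiftOn p γ e₀ C z t) {t' : ℝ} (ht' : t' ≤ t) :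
    IsLipschitzLiftOn p γ e₀ C z t' :=
  ⟨h.apply_zero, h.lifts.mono (Icc_subset_Icc_right ht'),
    h.lipschitzOnWith.mono (Icc_subset_Icc_right ht')⟩

theorem IsLipschitzLiftOn.eqOn [TopologicalSpace F] (hp : IsLocalHomeomorph p) {C' : ℝ≥0}
    {z' : ℝ → E} (h : IsLipschitzLiftOn p γ e₀ C z t)
    (h' : IsLipschitzLiftOn p γ e₀ C' z' t) (ht : 0 ≤ t) : EqOn z z' (Icc 0 t) :=
  (T2Space.isSeparatedMap p).eqOn_of_comp_eqOn hp.isLocallyInjective isPreconnected_Icc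
    h.lipschitzOnWith.continuousOn h'.lipschitzOnWith.continuousOn (h.lifts.trans h'.lifts.symm)
    ⟨le_rfl, ht⟩ (h.apply_zero.trans h'.apply_zero.symm)

theorem isLipschitzLiftOn_zero (he₀ : p e₀ = γ 0) :
    IsLipschitzLiftOn p γ e₀ C (fun _ ↦ e₀) 0 := by
  refine ⟨rfl, fun s hs ↦ ?_, (LipschitzWith.const e₀).lipschitzOnWith.weaken zero_le⟩
  rw [Icc_self, mem_singleton_iff] at hs
  simp [hs, he₀]

theorem exists_isLipschitzLiftOn_of_forall_lt [TopologicalSpace F] [T2Space F] [CompleteSpace E]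
    (hp : IsLocalHomeomorph p) (hγ : ContinuousOn γ (Icc 0 t)) (ht : 0 < t)
    (h : ∀ s ∈ Ico 0 t, ∃ z, IsLipschitzLiftOn p γ e₀ C z s) :
    ∃ z, IsLipschitzLiftOn p γ e₀ C z t := by
  have : Nonempty E := ⟨e₀⟩
  choose! z hz using h
  have hcoh : ∀ s ∈ Ico 0 t, ∀ s' ∈ Ico 0 t, s ≤ s' → z s s = z s' s :=
    fun s hs s' hs' hss' ↦
      ((hz s hs).eqOn hp ((hz s' hs').mono hss') hs.1) ⟨hs.1, le_rfl⟩
  set Γ : ℝ → E := fun s ↦ z s s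
  have hΓ : LipschitzOnWith C Γ (Ico 0 t) := by
    refine .of_dist_le_mul fun s hs s' hs' ↦ ?_
    wlog hss' : s ≤ s' generalizing s s'
    · rw [dist_comm, dist_comm s]; exact this s' hs' s hs (le_of_not_ge hss')
    rw [show Γ s = z s' s from hcoh s hs s' hs' hss']
    exact (hz s' hs').lipschitzOnWith.dist_le_mul s ⟨hs.1, hss'⟩ s' ⟨hs'.1, le_rfl⟩
  have hclosure : closure (Ico 0 t) = Icc 0 t := closure_Ico ht.ne
  have hext : LipschitzOnWith C (extendFrom (Ico 0 t) Γ) (Icc 0 t) :=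
    hclosure ▸ hΓ.lipschitzOnWith_extendFrom
  have hextends := extendFrom_extends hΓ.continuousOn
  refine ⟨extendFrom (Ico 0 t) Γ, ?_, ?_, hext⟩
  · rw [hextends 0 ⟨le_rfl, ht⟩]; exact (hz 0 ⟨le_rfl, ht⟩).apply_zero
  · refine EqOn.of_subset_closure (fun s hs ↦ ?_)
      (hp.continuous.comp_continuousOn hext.continuousOn) hγ Ico_subset_Icc_self hclosure.ge
    simp only [Function.comp_apply, hextends s hs]
    exact (hz s hs).lifts ⟨hs.1, le_rfl⟩

theorem exists_isLipschitzLiftOn_gt [MetricSpace F] {K L : ℝ≥0} (hp : IsOpenMap p)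
    (hK : ∀ e, ∃ U ∈ 𝓝 e, AntilipschitzWith K (U.domRestrict p))
    (hγ : LipschitzOnWith L γ (Icc 0 1)) (hz : IsLipschitzLiftOn p γ e₀ (K * L) z t)
    (ht₀ : 0 ≤ t) (ht₁ : t < 1) :
    ∃ t' ∈ Ioc t 1, ∃ z', IsLipschitzLiftOn p γ e₀ (K * L) z' t' := by
  obtain ⟨U, hU, hUK⟩ := hK (z t)
  obtain ⟨V, hVU, hVo, hzV⟩ := mem_nhds_iff.1 hU
  have hV : γ ⁻¹' (p '' V) ∈ 𝓝[≥] t := by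
    rw [← nhdsWithin_Icc_eq_nhdsGE ht₁]
    refine ((hγ.continuousOn t ⟨ht₀, ht₁.le⟩).mono (Icc_subset_Icc_left ht₀)) ?_
    rw [← hz.lifts ⟨ht₀, le_rfl⟩]
    exact hp.image_mem_nhds (hVo.mem_nhds hzV)
  obtain ⟨u, htu, hu⟩ := mem_nhdsGE_iff_exists_Icc_subset.1 hV
  have hw : ∀ s ∈ Icc t (min u 1), ∃ x ∈ V, p x = γ s := fun s hs ↦
    hu ((Icc_subset_Icc_right (min_le_left _ _)) hs)
  have : Nonempty E := ⟨e₀⟩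
  choose! w hwV hwγ using hw
  set z' : ℝ → E := fun s ↦ if s ≤ t then z s else w s
  have hz'γ : EqOn (p ∘ z') γ (Icc 0 (min u 1)) := fun s hs ↦ by
    by_cases hst : s ≤ t
    · simpa [z', hst] using hz.lifts ⟨hs.1, hst⟩
    · simpa [z', hst] using hwγ s ⟨(not_le.1 hst).le, hs.2⟩
  have hz'U : MapsTo z' (Icc t (min u 1)) U := fun s hs ↦ by
    by_cases hst : s ≤ t
    · simpa [z', hst, le_antisymm hst hs.1] using mem_of_mem_nhds hU
    · simpa [z', hst] using hVU (hwV s hs)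
  refine ⟨min u 1, ⟨lt_min htu ht₁, min_le_right _ _⟩, z',
    ⟨by simp [z', ht₀, hz.apply_zero], hz'γ, ?_⟩⟩
  refine LipschitzOnWith.Icc_union_Icc (hz.lipschitzOnWith.congr fun s hs ↦ by simp [z', hs.2]) ?_
  refine LipschitzOnWith.of_antilipschitzWith_comp hUK hz'U ?_
  exact (hγ.mono (Icc_subset_Icc ht₀ (min_le_right _ _))).congr
    fun s hs ↦ (hz'γ ⟨ht₀.trans hs.1, hs.2⟩).symm

theorem IsLocalHomeomorph.exists_isLipschitzLiftOn [MetricSpace F] [CompleteSpace E] {K L : ℝ≥0}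
    (hp : IsLocalHomeomorph p) (hK : ∀ e, ∃ U ∈ 𝓝 e, AntilipschitzWith K (U.domRestrict p))
    (hγ : LipschitzOnWith L γ (Icc 0 1)) (he₀ : p e₀ = γ 0) :
    ∃ z, IsLipschitzLiftOn p γ e₀ (K * L) z 1 := by
  set S := {t ∈ Icc (0 : ℝ) 1 | ∃ z, IsLipschitzLiftOn p γ e₀ (K * L) z t}
  have h0 : 0 ∈ S := ⟨left_mem_Icc.2 zero_le_one, _, isLipschitzLiftOn_zero he₀⟩
  have hbdd : BddAbove S := ⟨1, fun t ht ↦ ht.1.2⟩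
  set τ := sSup S
  have hτ₀ : 0 ≤ τ := le_csSup hbdd h0
  have hτ₁ : τ ≤ 1 := csSup_le ⟨0, h0⟩ fun t ht ↦ ht.1.2
  have hτ : τ ∈ S := by
    refine ⟨⟨hτ₀, hτ₁⟩, ?_⟩
    rcases hτ₀.eq_or_lt with hτ | hτ
    · rw [← hτ]; exact h0.2
    refine exists_isLipschitzLiftOn_of_forall_lt hp
      (hγ.continuousOn.mono (Icc_subset_Icc_right hτ₁)) hτ fun s hs ↦ ?_
    obtain ⟨t, ⟨-, z, hz⟩, hst⟩ := exists_lt_of_lt_csSup ⟨0, h0⟩ hs.2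
    exact ⟨z, hz.mono hst.le⟩
  obtain ⟨z, hz⟩ := hτ.2
  rcases hτ₁.eq_or_lt with hτ₁ | hτ₁
  · exact ⟨z, hτ₁ ▸ hz⟩
  obtain ⟨t', ht', z', hz'⟩ := exists_isLipschitzLiftOn_gt hp.isOpenMap hK hγ hz hτ₀ hτ₁
  exact absurd (le_csSup hbdd ⟨⟨hτ₀.trans ht'.1.le, ht'.2⟩, z', hz'⟩) ht'.1.not_ge

end PathLifting

open AffineMap unitInterval in
theorem IsLocalHomeomorph.exists_continuous_inverse {E F : Type*} [MetricSpace E]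
    [CompleteSpace E] [ConnectedSpace E] [NormedAddCommGroup F] [NormedSpace ℝ F] {p : E → F}
    {K : ℝ≥0} (hp : IsLocalHomeomorph p)
    (hK : ∀ e, ∃ U ∈ 𝓝 e, AntilipschitzWith K (U.domRestrict p)) :
    ∃ g : F → E, Continuous g ∧ Function.LeftInverse g p ∧ Function.RightInverse g p := by
  obtain ⟨e₀⟩ : Nonempty E := inferInstance
  have hlift y : ∃ z, IsLipschitzLiftOn p (lineMap (p e₀) y) e₀ (K * nndist (p e₀) y) z 1 :=
    hp.exists_isLipschitzLiftOn hK (lipschitzWith_lineMap _ _).lipschitzOnWith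
      (lineMap_apply_zero _ _).symm
  choose z hz using hlift
  have hcont : Continuous fun q : I × F ↦ z q.2 q.1 := by
    refine hp.continuous_lift (T2Space.isSeparatedMap p)
      ⟨fun q : I × F ↦ lineMap (p e₀) q.2 (q.1 : ℝ), by fun_prop⟩ ?_ ?_ fun y ↦ ?_
    · exact funext fun q ↦ (hz q.2).lifts q.1.2
    · exact continuous_const.congr fun y ↦ (hz y).apply_zero.symm
    · exact (hz y).lipschitzOnWith.continuousOn.comp_continuous continuous_subtype_val Subtype.prop
  set g : F → E := fun y ↦ z y 1
  have hpg : Function.RightInverse g p := fun y ↦ by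
    simpa using (hz y).lifts (right_mem_Icc.2 zero_le_one)
  have hg : Continuous g := hcont.comp ((continuous_const (y := (1 : I))).prodMk continuous_id)
  have hg₀ : g (p e₀) = e₀ := by
    have hconst : IsLipschitzLiftOn p (lineMap (p e₀) (p e₀)) e₀ 0 (fun _ ↦ e₀) 1 :=
      ⟨rfl, fun _ _ ↦ (lineMap_same_apply _ _).symm,
        (LipschitzWith.const e₀).lipschitzOnWith⟩
    exact (hz (p e₀)).eqOn hp hconst zero_le_one (right_mem_Icc.2 zero_le_one)
  refine ⟨g, hg, congrFun ?_, hpg⟩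
  exact (T2Space.isSeparatedMap p).eq_of_comp_eq hp.isLocallyInjective (hg.comp hp.continuous)
    continuous_id (funext fun e ↦ hpg (p e)) e₀ hg₀

section InverseFunction

variable {𝕜 E F : Type*} [NontriviallyNormedField 𝕜] [NormedAddCommGroup E]
  [NormedSpace 𝕜 E] [NormedAddCommGroup F] [NormedSpace 𝕜 F] {f : E → F}

theorem isLocalHomeomorph_of_hasStrictFDerivAt_equiv [CompleteSpace E] {f' : E → E ≃L[𝕜] F}
    (hf : ∀ x, HasStrictFDerivAt f (f' x : E →L[𝕜] F) x) : IsLocalHomeomorph f := fun x ↦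
  ⟨(hf x).toOpenPartialHomeomorph f, (hf x).mem_toOpenPartialHomeomorph_source, rfl⟩

theorem HasStrictFDerivAt.exists_nhds_antilipschitzWith {f' : E ≃L[𝕜] F} {a : E}
    (hf : HasStrictFDerivAt f (f' : E →L[𝕜] F) a) :
    ∃ U ∈ 𝓝 a, AntilipschitzWith (2 * ‖(f'.symm : F →L[𝕜] E)‖₊) (U.domRestrict f) := by
  obtain ⟨U, haU, hUo, hU⟩ := hf.approximates_deriv_on_open_nhds
  refine ⟨U, hUo.mem_nhds haU, ?_⟩
  convert hU.antilipschitz (f'.subsingleton_or_nnnorm_symm_pos.imp id fun h ↦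
    NNReal.half_lt_self (inv_pos.2 h).ne') using 1
  rw [tsub_eq_of_eq_add (add_halves _).symm, inv_div, div_inv_eq_mul]

end InverseFunction

theorem hadamard_global_inverse_general
    {X : Type*} [NormedAddCommGroup X] [NormedSpace ℝ X] [CompleteSpace X]
    (f : X → X) (φ : X → X ≃L[ℝ] X) (M : ℝ)
    (hdf : ∀ x, HasFDerivAt f (φ x : X →L[ℝ] X) x)
    (hcont : Continuous fun x => (φ x : X →L[ℝ] X))
    (hbound : ∀ x, ‖((φ x).symm : X →L[ℝ] X)‖ ≤ M) :
    ∃ g : X → X, (∀ x, g (f x) = x) ∧ (∀ x, f (g x) = x) ∧ ContDiff ℝ 1 g := by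
  have hstrict x : HasStrictFDerivAt f (φ x : X →L[ℝ] X) x :=
    hasStrictFDerivAt_of_hasFDerivAt_of_continuousAt (.of_forall hdf) hcont.continuousAt
  have hK x : ∃ U ∈ 𝓝 x, AntilipschitzWith (2 * M.toNNReal) (U.domRestrict f) := by
    obtain ⟨U, hU, hUK⟩ := (hstrict x).exists_nhds_antilipschitzWith
    refine ⟨U, hU, .of_le_mul_dist fun u v ↦ (hUK.le_mul_dist u v).trans ?_⟩
    gcongr
    exact NNReal.le_toNNReal_of_coe_le (hbound x)
  obtain ⟨g, hg, hgf, hfg⟩ :=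
    (isLocalHomeomorph_of_hasStrictFDerivAt_equiv hstrict).exists_continuous_inverse hK
  have hf : ContDiff ℝ 1 f := contDiff_one_iff_fderiv.2
    ⟨fun x ↦ (hdf x).differentiableAt, hcont.congr fun x ↦ (hdf x).fderiv.symm⟩
  let Φ : X ≃ₜ X := ⟨⟨f, g, hgf, hfg⟩, hf.continuous, hg⟩
  exact ⟨g, hgf, hfg, Φ.contDiff_symm hdf hf⟩

/-- **Hadamard's global inverse function theorem.**
If `f : X → X` is `C¹` on a Banach space `X`, with derivative `φ x` at every
point `x` being a continuous linear isomorphism whose inverse is uniformly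
bounded by `M`, then `f` is bijective with a `C¹` inverse. -/
theorem hadamard_global_inverse
    {X : Type*} [NormedAddCommGroup X] [NormedSpace ℝ X] [CompleteSpace X]
    (f : X → X) (φ : X → X ≃L[ℝ] X) (M : ℝ) (hM : 0 < M)
    (hdf : ∀ x, HasFDerivAt f (φ x : X →L[ℝ] X) x)
    (hcont : Continuous fun x => (φ x : X →L[ℝ] X))
    (hbound : ∀ x, ‖((φ x).symm : X →L[ℝ] X)‖ ≤ M) :
    ∃ g : X → X, (∀ x, g (f x) = x) ∧ (∀ x, f (g x) = x) ∧ ContDiff ℝ 1 g :=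
  hadamard_global_inverse_general f φ M hdf hcont hbound
end

section
/- Let X be a Banach space and let f : X → X be continuously (Fréchet) differentiable. Suppose that for every x ∈ X the derivative f'(x) is an invertible bounded linear operator and that there is a constant M > 0 such that ‖[f'(x)]⁻¹‖ ≤ M for all x ∈ X. Then f is surjective: for every y ∈ X there exists x ∈ X with f(x) = y. -/
/-!
Ekeland's variational principle, applied to the residual `x ↦ ‖f x - y‖` with slope `1 / (2M)`,
gives a point `u` at which the residual cannot decrease faster than at that slope. Along the
Newton direction `h = [f'(u)]⁻¹ (y - f u)` it decreases at rate `‖f u - y‖`, and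
`‖h‖ ≤ M ‖f u - y‖`; hence `‖f u - y‖ ≤ ‖f u - y‖ / 2`, that is, `f u = y`.
-/

open Filter Metric Set Topology

section Ekeland

variable {α : Type*} [MetricSpace α] {F : α → ℝ} {ε : ℝ}

def ekelandSet (F : α → ℝ) (ε : ℝ) (p : α) : Set α :=
  {q | F q + ε * dist q p ≤ F p}

theorem self_mem_ekelandSet (p : α) : p ∈ ekelandSet F ε p := by
  simp [ekelandSet]

theorem ekelandSet_subset (hε : 0 ≤ ε) {p q : α} (hq : q ∈ ekelandSet F ε p) :
    ekelandSet F ε q ⊆ ekelandSet F ε p := fun z hz => by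
  have := mul_le_mul_of_nonneg_left (dist_triangle z q p) hε
  simp only [ekelandSet, mem_ofPred_eq] at hq hz ⊢
  linarith

theorem isClosed_ekelandSet (hF : LowerSemicontinuous F) (p : α) :
    IsClosed (ekelandSet F ε p) :=
  (hF.add ((continuous_const.mul (continuous_id.dist continuous_const)).lowerSemicontinuous
    (f := fun q => ε * dist q p))).isClosed_preimage (F p)

theorem exists_mem_ekelandSet_forall_le_add (hb : BddBelow (range F)) (p : α) {δ : ℝ}
    (hδ : 0 < δ) : ∃ q ∈ ekelandSet F ε p, ∀ z ∈ ekelandSet F ε p, F q ≤ F z + δ := by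
  have hne : (F '' ekelandSet F ε p).Nonempty := ⟨F p, p, self_mem_ekelandSet p, rfl⟩
  have hbdd : BddBelow (F '' ekelandSet F ε p) := hb.mono (image_subset_range _ _)
  obtain ⟨_, ⟨q, hq, rfl⟩, hlt⟩ := exists_lt_of_csInf_lt hne (lt_add_of_pos_right _ hδ)
  exact ⟨q, hq, fun z hz => hlt.le.trans (by gcongr; exact csInf_le hbdd ⟨z, hz, rfl⟩)⟩

theorem ekelandSet_subset_closedBall (hε : 0 < ε) {p q : α} {r : ℝ}
    (hq : ∀ z ∈ ekelandSet F ε p, F q ≤ F z + ε * r)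
    (hpq : ekelandSet F ε q ⊆ ekelandSet F ε p) :
    ekelandSet F ε q ⊆ closedBall q r := fun z hz => by
  have := hq z (hpq hz)
  simp only [ekelandSet, mem_ofPred_eq] at hz
  rw [mem_closedBall, ← mul_le_mul_iff_right₀ hε]
  linarith

/-- Ekeland's variational principle. -/
theorem exists_forall_le_add_mul_dist [CompleteSpace α] [Nonempty α]
    (hF : LowerSemicontinuous F) (hb : BddBelow (range F)) (hε : 0 < ε) :
    ∃ u, ∀ z, F u ≤ F z + ε * dist z u := by
  choose next next_mem next_le using fun (n : ℕ) (p : α) =>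
    exists_mem_ekelandSet_forall_le_add (ε := ε) hb p (δ := ε * (1 / (n + 1))) (by positivity)
  let x : ℕ → α := fun n => Nat.rec (Classical.arbitrary α) next n
  let s : ℕ → Set α := fun n => ekelandSet F ε (x (n + 1))
  have hs_anti : Antitone s := antitone_nat_of_succ_le fun n =>
    ekelandSet_subset hε.le (next_mem _ _)
  have hs_ball (n : ℕ) : s n ⊆ closedBall (x (n + 1)) (1 / (n + 1)) :=
    ekelandSet_subset_closedBall hε (next_le n (x n)) (ekelandSet_subset hε.le (next_mem _ _))
  have hs_diam : Tendsto (fun n => diam (s n)) atTop (𝓝 0) := by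
    refine squeeze_zero (fun _ => diam_nonneg) (fun n => (diam_mono (hs_ball n)
      isBounded_closedBall).trans (diam_closedBall (by positivity))) ?_
    simpa using tendsto_one_div_add_atTop_nhds_zero_nat.const_mul (2 : ℝ)
  obtain ⟨u, hu⟩ := nonempty_iInter_of_nonempty_biInter
    (fun n => isClosed_ekelandSet hF _)
    (fun n => isBounded_closedBall.subset (hs_ball n))
    (fun N => ⟨x (N + 1), mem_iInter₂.2 fun n hn => hs_anti hn (self_mem_ekelandSet _)⟩) hs_diam
  rw [mem_iInter] at hu
  refine ⟨u, fun z => not_lt.1 fun hlt => ?_⟩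
  have hz (n : ℕ) : z ∈ s n := ekelandSet_subset hε.le (hu n) hlt.le
  have hzu : dist z u ≤ 0 := ge_of_tendsto' hs_diam fun n =>
    dist_le_diam_of_mem (isBounded_closedBall.subset (hs_ball n)) (hz n) (hu n)
  rw [dist_le_zero.1 hzu, dist_self, mul_zero, add_zero] at hlt
  exact lt_irrefl _ hlt

end Ekeland

section NewtonStep

variable {E F : Type*} [NormedAddCommGroup E] [NormedSpace ℝ E] [NormedAddCommGroup F]
  [NormedSpace ℝ F]

theorem eventually_norm_le_of_hasDerivAt_neg {g : ℝ → F} (hg : HasDerivAt g (-g 0) 0) {c : ℝ}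
    (hc : 0 < c) : ∀ᶠ t in 𝓝[>] 0, ‖g t‖ ≤ (1 - t) * ‖g 0‖ + c * t := by
  filter_upwards [nhdsWithin_le_nhds (hg.isLittleO.def hc), Ioo_mem_nhdsGT one_pos]
    with t hlin ⟨ht0, ht1⟩
  rw [sub_zero, Real.norm_of_nonneg ht0.le] at hlin
  calc ‖g t‖ = ‖(g t - g 0 - t • -g 0) + (1 - t) • g 0‖ := by congr 1; module
    _ ≤ c * t + (1 - t) * ‖g 0‖ := by
      refine norm_add_le_of_le hlin ?_
      rw [norm_smul, Real.norm_of_nonneg (by linarith)]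
    _ = (1 - t) * ‖g 0‖ + c * t := add_comm _ _

theorem HasFDerivAt.norm_sub_le_mul_norm_of_forall_le {f : E → F} {f' : E →L[ℝ] F} {u h : E}
    {y : F} {ε : ℝ} (hf : HasFDerivAt f f' u) (hu : ∀ z, ‖f u - y‖ ≤ ‖f z - y‖ + ε * ‖z - u‖)
    (hh : f' h = y - f u) : ‖f u - y‖ ≤ ε * ‖h‖ := by
  have hline : HasDerivAt (fun t : ℝ => u + t • h) h 0 := by
    simpa using ((hasDerivAt_id (0 : ℝ)).smul_const h).const_add u
  have hg : HasDerivAt (fun t : ℝ => f (u + t • h) - y) (f' h) 0 :=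
    ((by simpa using hf : HasFDerivAt f f' (u + (0 : ℝ) • h)).comp_hasDerivAt 0 hline).sub_const y
  rw [hh, ← neg_sub] at hg
  refine le_of_forall_pos_le_add fun c hc => ?_
  obtain ⟨t, hdecr, ht⟩ := ((eventually_norm_le_of_hasDerivAt_neg
    (g := fun t : ℝ => f (u + t • h) - y) (by simpa using hg) hc).and self_mem_nhdsWithin).exists
  simp only [zero_smul, add_zero] at hdecr
  have hek := hu (u + t • h)
  rw [add_sub_cancel_left, norm_smul, Real.norm_of_nonneg ht.le] at hek
  have : t * ‖f u - y‖ ≤ t * (ε * ‖h‖ + c) := by linarith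
  exact le_of_mul_le_mul_left this ht

end NewtonStep

theorem hadamard_surjective_general
    {X : Type*} [NormedAddCommGroup X] [NormedSpace ℝ X] [CompleteSpace X]
    (f : X → X) (φ : X → X ≃L[ℝ] X) (M : ℝ) (hM : 0 < M)
    (hdf : ∀ x, HasFDerivAt f (φ x : X →L[ℝ] X) x)
    (hbound : ∀ x, ‖((φ x).symm : X →L[ℝ] X)‖ ≤ M) :
    Function.Surjective f := by
  intro y
  have hf : Continuous f := continuous_iff_continuousAt.2 fun x => (hdf x).continuousAt
  obtain ⟨u, hu⟩ := exists_forall_le_add_mul_dist (F := fun x => ‖f x - y‖)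
    (hf.sub continuous_const).norm.lowerSemicontinuous ⟨0, by simp [lowerBounds]⟩
    (ε := 1 / (2 * M)) (by positivity)
  refine ⟨u, ?_⟩
  set h := (φ u).symm (y - f u)
  have hres : ‖f u - y‖ ≤ 1 / (2 * M) * ‖h‖ :=
    (hdf u).norm_sub_le_mul_norm_of_forall_le (fun z => by simpa [dist_eq_norm] using hu z)
      ((φ u).apply_symm_apply _)
  have hh : ‖h‖ ≤ M * ‖f u - y‖ := by
    rw [norm_sub_rev]
    exact ((φ u).symm : X →L[ℝ] X).le_of_opNorm_le (hbound u) _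
  have : 1 / (2 * M) * ‖h‖ ≤ ‖f u - y‖ / 2 := by
    rw [div_mul_eq_mul_div, one_mul, div_le_iff₀ (by positivity)]
    linarith
  rw [← sub_eq_zero, ← norm_le_zero_iff]
  linarith

/-- Under Hadamard's hypotheses, `f` is surjective. -/
theorem hadamard_surjective
    {X : Type*} [NormedAddCommGroup X] [NormedSpace ℝ X] [CompleteSpace X]
    (f : X → X) (φ : X → X ≃L[ℝ] X) (M : ℝ) (hM : 0 < M)
    (hdf : ∀ x, HasFDerivAt f (φ x : X →L[ℝ] X) x)
    (hcont : Continuous fun x => (φ x : X →L[ℝ] X))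
    (hbound : ∀ x, ‖((φ x).symm : X →L[ℝ] X)‖ ≤ M) :
    Function.Surjective f :=
  hadamard_surjective_general f φ M hM hdf hbound
end

section
/- Let X be a Banach space and let f : X → X be continuously (Fréchet) differentiable with f'(x) invertible for all x ∈ X and ‖[f'(x)]⁻¹‖ ≤ M for all x ∈ X, for some M > 0. Let K ⊆ X be a compact set. Then f has a continuous right inverse on K: there exists a continuous map g : K → X such that f(g(y)) = y for all y ∈ K. -/
/-!
Near every point, the inverse function theorem with the uniform bound `‖f'(x)⁻¹‖ ≤ M` shows that
on small balls `f` expands distances by at most `2M` and covers balls: `f` is *locally regular*.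
Lifts of paths through such a map are unique (it is locally injective), and the lift of a
`K`-Lipschitz path is `2MK`-Lipschitz. Hence lifts of a segment defined on `[0, t)` converge as
`t → sup`, by completeness, and near the limit point the radius of regularity is uniform, so the
lift continues past the supremum: every segment starting at `f 0` lifts. The endpoint `g y` of the
lift of `[f 0, y]` is a right inverse of `f`. Lifting the segment to a nearby `y'` inside the
uniformly regular neighbourhood of the compact lift of `[f 0, y]` shows that `g` is locally
`2M`-Lipschitz.
-/

open Set Metric Filter Topology
open scoped NNReal

section IsLiftOn

variable {X Y T : Type*} [TopologicalSpace X] [TopologicalSpace T]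

def IsLiftOn (f : X → Y) (p : T → Y) (x : T → X) (s : Set T) : Prop :=
  ContinuousOn x s ∧ ∀ t ∈ s, f (x t) = p t

variable {f : X → Y} {p : T → Y} {x y : T → X} {s s' : Set T}

theorem IsLiftOn.mono (hx : IsLiftOn f p x s) (h : s' ⊆ s) : IsLiftOn f p x s' :=
  ⟨hx.1.mono h, fun t ht => hx.2 t (h ht)⟩

theorem IsLiftOn.congr (hx : IsLiftOn f p x s) (h : EqOn y x s) : IsLiftOn f p y s :=
  ⟨hx.1.congr h, fun t ht => (h ht).symm ▸ hx.2 t ht⟩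

theorem IsLiftOn.union (hs : IsLiftOn f p x s) (hs' : IsLiftOn f p x s') (hsc : IsClosed s)
    (hsc' : IsClosed s') : IsLiftOn f p x (s ∪ s') :=
  ⟨hs.1.union_of_isClosed hs'.1 hsc hsc', fun t ht => ht.elim (hs.2 t) (hs'.2 t)⟩

theorem IsLiftOn.eqOn [T2Space X] (hinj : IsLocallyInjective f) (hx : IsLiftOn f p x s)
    (hy : IsLiftOn f p y s) (hs : IsPreconnected s) {a : T} (ha : a ∈ s) (hxy : x a = y a) :
    EqOn x y s :=
  (T2Space.isSeparatedMap f).eqOn_of_comp_eqOn hinj hs hx.1 hy.1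
    (fun t ht => (hx.2 t ht).trans (hy.2 t ht).symm) ha hxy

end IsLiftOn

theorem IsLocallyInjective.exists_eqOn_isLiftOn {X Y : Type*} [TopologicalSpace X] [T2Space X]
    {f : X → Y} (hinj : IsLocallyInjective f) (p : ℝ → Y) (x₀ : X) :
    ∃ ℓ : ℝ → X, ∀ t x, IsLiftOn f p x (Icc 0 t) → x 0 = x₀ → EqOn ℓ x (Icc 0 t) := by
  classical
  refine ⟨fun u => if h : ∃ x, IsLiftOn f p x (Icc 0 u) ∧ x 0 = x₀ then h.choose u else x₀,
    fun t x hx hx0 u hu => ?_⟩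
  have hxu := hx.mono (Icc_subset_Icc le_rfl hu.2)
  have h : ∃ x, IsLiftOn f p x (Icc 0 u) ∧ x 0 = x₀ := ⟨x, hxu, hx0⟩
  simp only [dif_pos h]
  exact h.choose_spec.1.eqOn hinj hxu isPreconnected_Icc (left_mem_Icc.2 hu.1)
    (h.choose_spec.2.trans hx0.symm) (right_mem_Icc.2 hu.1)

theorem dist_le_mul_sub_of_eventually_dist_le {X : Type*} [PseudoMetricSpace X] {g : ℝ → X}
    {a b C : ℝ} (hg : ContinuousOn g (Icc a b))
    (hloc : ∀ s ∈ Ico a b, ∀ᶠ t in 𝓝[>] s, dist (g t) (g s) ≤ C * (t - s)) :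
    ∀ t ∈ Icc a b, dist (g t) (g a) ≤ C * (t - a) := by
  refine image_le_of_liminf_slope_right_le_deriv_boundary (B' := fun _ => C) (by fun_prop)
    (by simp) (by fun_prop) (fun s _ => ?_) fun s hs r hr => ?_
  · simpa using ((hasDerivAt_id s).sub_const a).const_mul C |>.hasDerivWithinAt
  refine Eventually.frequently ?_
  filter_upwards [hloc s hs, self_mem_nhdsWithin] with t ht hst
  have hst : 0 < t - s := sub_pos.2 hst
  rw [slope_def_field, div_lt_iff₀ hst]
  nlinarith [dist_triangle (g t) (g s) (g a)]

section Lifting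

variable {X Y : Type*} [MetricSpace X] [PseudoMetricSpace Y] {f : X → Y} {L K : ℝ≥0}

def RegularOnBall (f : X → Y) (L : ℝ≥0) (z : X) (r : ℝ) : Prop :=
  (∀ u ∈ closedBall z r, ∀ v ∈ closedBall z r, dist u v ≤ L * dist (f u) (f v)) ∧
    ∀ ε, 0 ≤ ε → L * ε ≤ r → SurjOn f (closedBall z (L * ε)) (closedBall (f z) ε)

def IsLocallyRegular (f : X → Y) (L : ℝ≥0) : Prop :=
  ∀ a, ∃ r > 0, ∀ z ∈ closedBall a r, RegularOnBall f L z r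

theorem RegularOnBall.mono {z : X} {r s : ℝ} (h : RegularOnBall f L z r) (hsr : s ≤ r) :
    RegularOnBall f L z s :=
  ⟨fun u hu v hv => h.1 u (closedBall_subset_closedBall hsr hu) v
      (closedBall_subset_closedBall hsr hv),
    fun ε hε hLε => h.2 ε hε (hLε.trans hsr)⟩

theorem IsLocallyRegular.isLocallyInjective (hreg : IsLocallyRegular f L) :
    IsLocallyInjective f := by
  intro a
  obtain ⟨r, hr, ha⟩ := hreg a
  refine ⟨ball a r, isOpen_ball, mem_ball_self hr, fun u hu v hv huv => ?_⟩
  have := (ha a (mem_closedBall_self hr.le)).1 u (ball_subset_closedBall hu) v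
    (ball_subset_closedBall hv)
  rwa [huv, dist_self, mul_zero, dist_le_zero] at this

theorem IsLocallyRegular.exists_forall_regularOnBall (hreg : IsLocallyRegular f L) {C : Set X}
    (hC : IsCompact C) : ∃ δ > 0, ∀ z ∈ C, RegularOnBall f L z δ := by
  have : ∀ᶠ δ in 𝓝 (0 : ℝ), ∀ z ∈ C, 0 < δ → RegularOnBall f L z δ := by
    refine hC.eventually_forall_of_forall_eventually fun a _ => ?_
    obtain ⟨r, hr, ha⟩ := hreg a
    filter_upwards [prod_mem_nhds (Iio_mem_nhds hr) (closedBall_mem_nhds a hr)]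
      with ⟨δ, z⟩ ⟨hδ, hz⟩ _ using (ha z hz).mono (le_of_lt hδ)
  obtain ⟨δ, hδC, hδ⟩ := ((this.filter_mono nhdsWithin_le_nhds).and
    (self_mem_nhdsWithin (s := Ioi 0))).exists
  exact ⟨δ, hδ, fun z hz => hδC z hz hδ⟩

theorem exists_isLiftOn_near {T : Type*} [TopologicalSpace T] {s : Set T} {Q : T → X}
    {P : T → Y} {δ : ℝ} (hQ : ContinuousOn Q s) (hP : ContinuousOn P s)
    (hreg : ∀ t ∈ s, RegularOnBall f L (Q t) δ) (hδ : 0 < δ)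
    (hclose : ∀ t ∈ s, L * dist (P t) (f (Q t)) ≤ δ / 2) :
    ∃ x, IsLiftOn f P x s ∧ ∀ t ∈ s, dist (x t) (Q t) ≤ L * dist (P t) (f (Q t)) := by
  have : ∀ t, ∃ u, t ∈ s → f u = P t ∧ dist u (Q t) ≤ L * dist (P t) (f (Q t)) := by
    intro t
    by_cases ht : t ∈ s
    · obtain ⟨u, hu, hfu⟩ := (hreg t ht).2 _ dist_nonneg (by linarith [hclose t ht])
        (mem_closedBall.2 le_rfl)
      exact ⟨u, fun _ => ⟨hfu, hu⟩⟩
    · exact ⟨Q t, fun h => absurd h ht⟩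
  choose x hx using this
  refine ⟨x, ⟨fun t ht => ?_, fun t ht => (hx t ht).1⟩, fun t ht => (hx t ht).2⟩
  -- for `t'` near `t`, both `x t'` and `x t` lie in the ball about `Q t` where `f` is regular
  have hnear : ∀ᶠ t' in 𝓝[s] t, dist (x t') (x t) ≤ L * dist (P t') (P t) := by
    filter_upwards [self_mem_nhdsWithin, hQ t ht (closedBall_mem_nhds _ (half_pos hδ))]
      with t' ht' hQt'
    have hxt' : x t' ∈ closedBall (Q t) δ := by
      rw [mem_closedBall]
      linarith [dist_triangle (x t') (Q t') (Q t), (hx t' ht').2, hclose t' ht',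
        mem_closedBall.1 hQt']
    have hxt : x t ∈ closedBall (Q t) δ :=
      mem_closedBall.2 (by linarith [(hx t ht).2, hclose t ht])
    simpa only [(hx t' ht').1, (hx t ht).1] using (hreg t ht).1 _ hxt' _ hxt
  have hP0 : Tendsto (fun t' => L * dist (P t') (P t)) (𝓝[s] t) (𝓝 0) := by
    simpa using ((hP t ht).dist (tendsto_const_nhds (x := P t))).const_mul (L : ℝ)
  exact tendsto_iff_dist_tendsto_zero.2
    (squeeze_zero' (Eventually.of_forall fun _ => dist_nonneg) hnear hP0)

theorem IsLiftOn.extend {p : ℝ → Y} {x : ℝ → X} {a s t r : ℝ} (hx : IsLiftOn f p x (Icc a s))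
    (has : a ≤ s) (hst : s ≤ t) (hp : LipschitzWith K p) (hreg : RegularOnBall f L (x s) r)
    (hr : 0 < r) (hLK : L * K * (t - s) ≤ r / 2) :
    ∃ x', IsLiftOn f p x' (Icc a t) ∧ EqOn x' x (Icc a s) := by
  have hxs : f (x s) = p s := hx.2 s ⟨has, le_rfl⟩
  obtain ⟨y, hy, hyx⟩ := exists_isLiftOn_near (s := Icc s t) (P := p) continuousOn_const
    hp.continuous.continuousOn (fun _ _ => hreg) hr fun u hu => by
      rw [hxs]
      calc (L : ℝ) * dist (p u) (p s) ≤ L * (K * dist u s) := by gcongr; exact hp.dist_le_mul u s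
        _ ≤ L * K * (t - s) := by
          rw [← mul_assoc, Real.dist_eq, abs_of_nonneg (by linarith [hu.1])]
          gcongr
          exact hu.2
        _ ≤ r / 2 := hLK
  have hys : y s = x s := by
    simpa [hxs] using hyx s ⟨le_rfl, hst⟩
  let x' : ℝ → X := fun u => if u ≤ s then x u else y u
  have hx'x : EqOn x' x (Icc a s) := fun u hu => if_pos hu.2
  have hx'y : EqOn x' y (Icc s t) := by
    intro u hu
    by_cases hus : u ≤ s
    · simp only [x', le_antisymm hus hu.1, hys, ite_self]
    · exact if_neg hus
  refine ⟨x', ?_, hx'x⟩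
  rw [← Icc_union_Icc_eq_Icc has hst]
  exact (hx.congr hx'x).union (hy.congr hx'y) isClosed_Icc isClosed_Icc

theorem IsLiftOn.lipschitzOnWith (hreg : IsLocallyRegular f L) {p : ℝ → Y} {x : ℝ → X}
    {a b : ℝ} (hx : IsLiftOn f p x (Icc a b)) (hp : LipschitzWith K p) :
    LipschitzOnWith (L * K) x (Icc a b) := by
  refine LipschitzOnWith.of_dist_le_mul fun v hv u hu => ?_
  wlog huv : u ≤ v generalizing u v
  · rw [dist_comm, dist_comm v]
    exact this u hu v hv (le_of_not_ge huv)
  have hloc : ∀ s ∈ Ico u v, ∀ᶠ t in 𝓝[>] s, dist (x t) (x s) ≤ L * K * (t - s) := by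
    intro s hs
    have hsab : s ∈ Icc a b := ⟨hu.1.trans hs.1, hs.2.le.trans hv.2⟩
    have hsub : Ioo s v ⊆ Icc a b := fun t ht => ⟨hsab.1.trans ht.1.le, ht.2.le.trans hv.2⟩
    obtain ⟨r, hr, hxs⟩ := hreg (x s)
    have hnear : ∀ᶠ t in 𝓝[Ioo s v] s, x t ∈ closedBall (x s) r :=
      nhdsWithin_mono _ hsub (hx.1 s hsab (closedBall_mem_nhds _ hr))
    rw [nhdsWithin_Ioo_eq_nhdsGT hs.2] at hnear
    filter_upwards [hnear, Ioo_mem_nhdsGT hs.2] with t hxt ht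
    calc dist (x t) (x s) ≤ L * dist (f (x t)) (f (x s)) :=
          (hxs (x s) (mem_closedBall_self hr.le)).1 _ hxt _ (mem_closedBall_self hr.le)
      _ ≤ L * (K * dist t s) := by
          rw [hx.2 t (hsub ht), hx.2 s hsab]
          gcongr
          exact hp.dist_le_mul t s
      _ = L * K * (t - s) := by
          rw [Real.dist_eq, abs_of_pos (sub_pos.2 ht.1), mul_assoc]
  have := dist_le_mul_sub_of_eventually_dist_le (hx.1.mono (Icc_subset_Icc hu.1 hv.2)) hloc v
    ⟨huv, le_rfl⟩
  rwa [Real.dist_eq, abs_of_nonneg (sub_nonneg.2 huv), NNReal.coe_mul]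

theorem IsLocallyRegular.lipschitzOnWith_of_isLiftOn_Icc (hreg : IsLocallyRegular f L)
    {p : ℝ → Y} (hp : LipschitzWith K p) {ℓ : ℝ → X} {S : Set ℝ}
    (hS : ∀ t ∈ S, 0 ≤ t ∧ IsLiftOn f p ℓ (Icc 0 t)) : LipschitzOnWith (L * K) ℓ S := by
  refine LipschitzOnWith.of_dist_le_mul fun u hu v hv => ?_
  wlog huv : u ≤ v generalizing u v
  · rw [dist_comm, dist_comm u]
    exact this v hv u hu (le_of_not_ge huv)
  exact ((hS v hv).2.lipschitzOnWith hreg hp).dist_le_mul u ⟨(hS u hu).1, huv⟩ v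
    (right_mem_Icc.2 (hS v hv).1)

theorem IsLocallyRegular.exists_isLiftOn [CompleteSpace X] (hreg : IsLocallyRegular f L)
    {p : ℝ → Y} (hp : LipschitzWith K p) {x₀ : X} (hx₀ : f x₀ = p 0) :
    ∃ x, IsLiftOn f p x (Icc 0 1) ∧ x 0 = x₀ := by
  let S : Set ℝ := {t ∈ Icc 0 1 | ∃ x, IsLiftOn f p x (Icc 0 t) ∧ x 0 = x₀}
  have hS0 : (0 : ℝ) ∈ S := by
    refine ⟨left_mem_Icc.2 zero_le_one, fun _ => x₀, ⟨continuousOn_const, fun t ht => ?_⟩, rfl⟩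
    rw [Icc_self, mem_singleton_iff] at ht
    rw [ht, hx₀]
  have hSbdd : BddAbove S := ⟨1, fun t ht => ht.1.2⟩
  -- by uniqueness, the lifts on the intervals `[0, t]`, `t ∈ S`, are restrictions of one map
  obtain ⟨ℓ, hℓx⟩ := hreg.isLocallyInjective.exists_eqOn_isLiftOn p x₀
  have hℓ : ∀ t ∈ S, IsLiftOn f p ℓ (Icc 0 t) ∧ ℓ 0 = x₀ := fun t ⟨ht, x, hx, hx0⟩ =>
    ⟨hx.congr (hℓx t x hx hx0), (hℓx t x hx hx0 (left_mem_Icc.2 ht.1)).trans hx0⟩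
  have hlip := hreg.lipschitzOnWith_of_isLiftOn_Icc hp fun t ht => ⟨ht.1.1, (hℓ t ht).1⟩
  set τ := sSup S
  have := mem_closure_iff_nhdsWithin_neBot.1 (csSup_mem_closure ⟨0, hS0⟩ hSbdd)
  obtain ⟨ξ, hξ⟩ : ∃ ξ, Tendsto ℓ (𝓝[S] τ) (𝓝 ξ) := cauchy_map_iff_exists_tendsto.1
    ((cauchy_nhds.mono nhdsWithin_le_nhds).map_of_le hlip.uniformContinuousOn inf_le_right)
  -- near `ξ` the radius of regularity is uniform, so lifts ending near `ξ` extend by a uniform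
  -- time `η`, beyond `τ` unless they reach `1`
  obtain ⟨r, hr, hξreg⟩ := hreg ξ
  obtain ⟨η, hη, hLKη⟩ := exists_pos_mul_lt (half_pos hr) (L * K)
  obtain ⟨s, ⟨hsξ, hsτ⟩, hsS⟩ : ∃ s, (ℓ s ∈ closedBall ξ r ∧ τ - η < s) ∧ s ∈ S :=
    ((hξ.eventually (closedBall_mem_nhds ξ hr)).and (nhdsWithin_le_nhds
      (Ioi_mem_nhds (sub_lt_self τ hη)))).and self_mem_nhdsWithin |>.exists
  obtain ⟨x, hx, hxℓ⟩ := (hℓ s hsS).1.extend (t := min 1 (s + η)) hsS.1.1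
    (le_min hsS.1.2 (by linarith)) hp (hξreg _ hsξ) hr <| by
      calc (L * K : ℝ) * (min 1 (s + η) - s) ≤ L * K * η := by
            gcongr
            linarith [min_le_right 1 (s + η)]
        _ ≤ r / 2 := hLKη.le
  have hx0 : x 0 = x₀ := (hxℓ (left_mem_Icc.2 hsS.1.1)).trans (hℓ s hsS).2
  obtain h1 | hsη := min_choice (1 : ℝ) (s + η)
  · exact ⟨x, h1 ▸ hx, hx0⟩
  · have : s + η ∈ S := ⟨hsη ▸ ⟨hsS.1.1.trans (le_min hsS.1.2 (by linarith)), min_le_left _ _⟩,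
      x, hsη ▸ hx, hx0⟩
    linarith [le_csSup hSbdd this]

end Lifting

section RightInverse

variable {X Y : Type*} [MetricSpace X] [NormedAddCommGroup Y]
  [NormedSpace ℝ Y] {f : X → Y} {L : ℝ≥0}

open AffineMap

theorem dist_lineMap_lineMap_right_le (p y y' : Y) {t : ℝ} (ht : t ∈ Icc (0 : ℝ) 1) :
    dist (lineMap p y' t) (lineMap p y t) ≤ dist y' y := by
  rw [lineMap_apply_module', lineMap_apply_module', dist_add_right, dist_smul₀, dist_sub_right,
    Real.norm_of_nonneg ht.1]
  exact mul_le_of_le_one_left dist_nonneg ht.2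

theorem IsLocallyRegular.exists_dist_lift_one_le (hreg : IsLocallyRegular f L) {b : X}
    {q : Y → ℝ → X} (hq : ∀ y, IsLiftOn f (lineMap (f b) y) (q y) (Icc 0 1))
    (hq0 : ∀ y, q y 0 = b) (y : Y) :
    ∃ ρ > 0, ∀ y', dist y' y < ρ → dist (q y' 1) (q y 1) ≤ L * dist y' y := by
  obtain ⟨δ, hδ, hδreg⟩ := hreg.exists_forall_regularOnBall
    (isCompact_Icc.image_of_continuousOn (hq y).1)
  obtain ⟨ρ, hρ, hLρ⟩ := exists_pos_mul_lt (half_pos hδ) L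
  refine ⟨ρ, hρ, fun y' hy' => ?_⟩
  have hfq : ∀ t ∈ Icc (0 : ℝ) 1, dist (lineMap (f b) y' t) (f (q y t)) ≤ dist y' y :=
    fun t ht => (hq y).2 t ht ▸ dist_lineMap_lineMap_right_le _ _ _ ht
  obtain ⟨x, hx, hxq⟩ := exists_isLiftOn_near (P := lineMap (f b) y') (hq y).1
    lineMap_continuous.continuousOn
    (fun t ht => hδreg _ (mem_image_of_mem _ ht)) hδ fun t ht => by
      have := mul_le_mul_of_nonneg_left (hfq t ht) L.coe_nonneg
      nlinarith [L.coe_nonneg]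
  have hx0 : x 0 = q y' 0 := by
    have := hxq 0 (left_mem_Icc.2 zero_le_one)
    rwa [(hq y).2 0 (left_mem_Icc.2 zero_le_one), lineMap_apply_zero, lineMap_apply_zero,
      dist_self, mul_zero, dist_le_zero, hq0, ← hq0 y'] at this
  have hxy' := hx.eqOn hreg.isLocallyInjective (hq y') isPreconnected_Icc
    (left_mem_Icc.2 zero_le_one) hx0 (right_mem_Icc.2 zero_le_one)
  rw [← hxy']
  exact (hxq 1 (right_mem_Icc.2 zero_le_one)).trans
    (by gcongr; exact hfq 1 (right_mem_Icc.2 zero_le_one))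

theorem IsLocallyRegular.exists_continuous_rightInverse [CompleteSpace X] [Nonempty X]
    (hreg : IsLocallyRegular f L) : ∃ g : Y → X, Continuous g ∧ Function.RightInverse g f := by
  obtain ⟨b⟩ := ‹Nonempty X›
  choose q hq hq0 using fun y =>
    hreg.exists_isLiftOn (lipschitzWith_lineMap (f b) y) (lineMap_apply_zero (f b) y).symm
  refine ⟨fun y => q y 1, continuous_iff_continuousAt.2 fun y => ?_, fun y => ?_⟩
  · obtain ⟨ρ, hρ, h⟩ := hreg.exists_dist_lift_one_le hq hq0 y
    exact continuousAt_of_locally_lipschitz hρ L h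
  · simpa using (hq y).2 1 (right_mem_Icc.2 zero_le_one)

end RightInverse

section Calculus

variable {E F : Type*} [NormedAddCommGroup E] [NormedSpace ℝ E] [CompleteSpace E]
  [NormedAddCommGroup F] [NormedSpace ℝ F] {f : E → F} {N : ℝ≥0}

theorem ApproximatesLinearOn.regularOnBall {A : E ≃L[ℝ] F} {s : Set E} (hN : 0 < N)
    (hA : ‖(A.symm : F →L[ℝ] E)‖ ≤ N) (hf : ApproximatesLinearOn f (A : E →L[ℝ] F) s (2 * N)⁻¹)
    {z : E} {r : ℝ} (hs : closedBall z r ⊆ s) : RegularOnBall f (2 * N) z r := by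
  let Ainv : (A : E →L[ℝ] F).NonlinearRightInverse :=
    { toFun := A.symm
      nnnorm := N
      bound' := fun y => ((A.symm : F →L[ℝ] E).le_opNorm y).trans (by gcongr)
      right_inv' := A.apply_symm_apply }
  have hN' : (0 : ℝ) < N := hN
  refine ⟨fun u hu v hv => ?_, fun ε hε hεr => ?_⟩
  · have hlin := hf _ (hs hu) _ (hs hv)
    have hAuv : ‖u - v‖ ≤ N * ‖A (u - v)‖ :=
      calc ‖u - v‖ = ‖A.symm (A (u - v))‖ := by rw [A.symm_apply_apply]
        _ ≤ N * ‖A (u - v)‖ := Ainv.bound _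
    have htri : ‖A (u - v)‖ ≤ ‖f u - f v‖ + ‖f u - f v - A (u - v)‖ := by
      simpa [norm_sub_rev] using norm_le_norm_add_norm_sub' (A (u - v)) (f u - f v)
    rw [dist_eq_norm, dist_eq_norm]
    push_cast at hlin ⊢
    have : (N : ℝ) * ((2 * (N : ℝ))⁻¹ * ‖u - v‖) = ‖u - v‖ / 2 := by field_simp
    nlinarith
  · have := hf.surjOn_closedBall_of_nonlinearRightInverse Ainv (by positivity)
      ((closedBall_subset_closedBall hεr).trans hs)
    have hradius : ((Ainv.nnnorm : ℝ)⁻¹ - ((2 * N)⁻¹ : ℝ≥0)) * ((2 * N : ℝ≥0) * ε) = ε := by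
      simp only [Ainv]
      push_cast
      field_simp
      ring
    rwa [hradius] at this

theorem isLocallyRegular_of_hasFDerivAt {φ : E → E ≃L[ℝ] F} (hN : 0 < N)
    (hdf : ∀ x, HasFDerivAt f (φ x : E →L[ℝ] F) x) (hcont : Continuous fun x => (φ x : E →L[ℝ] F))
    (hbound : ∀ x, ‖((φ x).symm : F →L[ℝ] E)‖ ≤ N) : IsLocallyRegular f (2 * N) := by
  intro a
  obtain ⟨s, hs, hfs⟩ := (hasStrictFDerivAt_of_hasFDerivAt_of_continuousAt
    (Eventually.of_forall hdf) hcont.continuousAt).approximates_deriv_on_nhds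
    (c := (2 * N)⁻¹) (Or.inr (by positivity))
  obtain ⟨ε, hε, hball⟩ := Metric.mem_nhds_iff.1 hs
  refine ⟨ε / 3, by positivity, fun z hz => hfs.regularOnBall hN (hbound a) fun w hw => hball ?_⟩
  rw [mem_ball]
  linarith [dist_triangle w z a, mem_closedBall.1 hz, mem_closedBall.1 hw]

end Calculus

theorem hadamard_right_inverse_on_compact_general
    {X : Type*} [NormedAddCommGroup X] [NormedSpace ℝ X] [CompleteSpace X]
    (f : X → X) (φ : X → X ≃L[ℝ] X) (M : ℝ) (hM : 0 < M)
    (hdf : ∀ x, HasFDerivAt f (φ x : X →L[ℝ] X) x)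
    (hcont : Continuous fun x => (φ x : X →L[ℝ] X))
    (hbound : ∀ x, ‖((φ x).symm : X →L[ℝ] X)‖ ≤ M)
    (K : Set X) :
    ∃ g : X → X, ContinuousOn g K ∧ ∀ y ∈ K, f (g y) = y := by
  lift M to ℝ≥0 using hM.le
  have hreg := isLocallyRegular_of_hasFDerivAt (NNReal.coe_pos.1 hM) hdf hcont hbound
  obtain ⟨g, hg, hfg⟩ := hreg.exists_continuous_rightInverse
  exact ⟨g, hg.continuousOn, fun y _ => hfg y⟩

/-- Under Hadamard's hypotheses, `f` has a continuous right inverse on every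
compact set `K`. -/
theorem hadamard_right_inverse_on_compact
    {X : Type*} [NormedAddCommGroup X] [NormedSpace ℝ X] [CompleteSpace X]
    (f : X → X) (φ : X → X ≃L[ℝ] X) (M : ℝ) (hM : 0 < M)
    (hdf : ∀ x, HasFDerivAt f (φ x : X →L[ℝ] X) x)
    (hcont : Continuous fun x => (φ x : X →L[ℝ] X))
    (hbound : ∀ x, ‖((φ x).symm : X →L[ℝ] X)‖ ≤ M)
    (K : Set X) (hK : IsCompact K) :
    ∃ g : X → X, ContinuousOn g K ∧ ∀ y ∈ K, f (g y) = y :=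
  hadamard_right_inverse_on_compact_general f φ M hM hdf hcont hbound K
end

section
/- Let X be a Banach space and let f : X → X be continuously (Fréchet) differentiable with f'(x) invertible for all x ∈ X and ‖[f'(x)]⁻¹‖ ≤ M for all x ∈ X, for some M > 0. Let K ⊆ X be a compact set with f(0) = 0 and 0 ∈ K. Then there exists a continuous map g : K → X such that f(g(y)) = y for all y ∈ K and g(0) = 0. -/
/-!
Fix `y`. By the inverse function theorem `f` is a local homeomorphism, and since
`‖f'(x)⁻¹‖ ≤ M` every lift through `f` of the segment `s ↦ s • y` starting at `0` is
`M‖y‖`-Lipschitz. Lifts are unique, so their endpoints along times increasing to the supremum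
`T` of the liftable times form a Cauchy sequence; a chart of `f` at its limit extends a lift past
`T` unless `T = 1`. Hence the segment lifts on all of `[0, 1]`, and `g y` is the endpoint of
that lift. The homotopy lifting property of separated local homeomorphisms makes the lift
depend continuously on `y`, and `g 0 = 0` because the constant path at `0` is the lift for
`y = 0`.
-/

open Set Filter Metric Topology
open scoped NNReal

theorem isLocalHomeomorph_of_hasStrictFDerivAt {𝕜 E F : Type*} [NontriviallyNormedField 𝕜]
    [NormedAddCommGroup E] [NormedSpace 𝕜 E] [CompleteSpace E]
    [NormedAddCommGroup F] [NormedSpace 𝕜 F] {f : E → F} {φ : E → E ≃L[𝕜] F}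
    (hf : ∀ x, HasStrictFDerivAt f (φ x : E →L[𝕜] F) x) : IsLocalHomeomorph f := fun x =>
  ⟨(hf x).toOpenPartialHomeomorph f, (hf x).mem_toOpenPartialHomeomorph_source,
    (hf x).toOpenPartialHomeomorph_coe.symm⟩

theorem lipschitzOnWith_of_comp_eqOn {E F G : Type*}
    [NormedAddCommGroup E] [NormedSpace ℝ E] [NormedAddCommGroup F] [NormedSpace ℝ F]
    [NormedAddCommGroup G] [NormedSpace ℝ G]
    {f : E → F} {φ : E → E ≃L[ℝ] F} {x : G → E} {h : G → F} {h' : G → G →L[ℝ] F}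
    {s : Set G} {M B : ℝ≥0} (hs : Convex ℝ s) (hx : ContinuousOn x s) (hfx : EqOn (f ∘ x) h s)
    (hf : ∀ a ∈ s, HasFDerivAt f (φ (x a) : E →L[ℝ] F) (x a))
    (hh : ∀ a ∈ s, HasFDerivWithinAt h (h' a) s a)
    (hM : ∀ a ∈ s, ‖((φ (x a)).symm : F →L[ℝ] E)‖₊ ≤ M) (hB : ∀ a ∈ s, ‖h' a‖₊ ≤ B) :
    LipschitzOnWith (M * B) x s := by
  refine Convex.lipschitzOnWith_of_nnnorm_hasFDerivWithin_le
    (f' := fun a => ((φ (x a)).symm : F →L[ℝ] E).comp (h' a)) (fun a ha => ?_)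
    (fun a ha => ?_) hs
  · refine HasFDerivWithinAt.of_comp_of_leftInverse (t := univ) ?_ (hf a ha).hasFDerivWithinAt
      (hh a ha) (eventually_nhdsWithin_of_forall hfx) (φ (x a)).symm_apply_apply ha
    rw [nhdsWithin_univ]
    exact hx a ha
  · exact (ContinuousLinearMap.opNNNorm_comp_le _ _).trans (mul_le_mul' (hM a ha) (hB a ha))

theorem cauchySeq_of_dist_le_mul_dist {α β : Type*} [PseudoMetricSpace α] [PseudoMetricSpace β]
    {u : ℕ → α} {v : ℕ → β} {K : ℝ} (h : ∀ m n, dist (u m) (u n) ≤ K * dist (v m) (v n))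
    (hv : CauchySeq v) : CauchySeq u := by
  rw [cauchySeq_iff_tendsto_dist_atTop_0] at hv ⊢
  exact squeeze_zero (fun _ => dist_nonneg) (fun p => h p.1 p.2) (by simpa using hv.const_mul K)

section PathLift

variable {E F : Type*} [TopologicalSpace E]

structure IsPathLiftOn (f : E → F) (γ : ℝ → F) (x₀ : E) (t : ℝ) (x : ℝ → E) : Prop where
  continuousOn : ContinuousOn x (Icc 0 t)
  apply_zero : x 0 = x₀
  eqOn : EqOn (f ∘ x) γ (Icc 0 t)

variable {f : E → F} {γ : ℝ → F} {x₀ : E} {t r : ℝ} {x x' : ℝ → E}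

namespace IsPathLiftOn

theorem mono (hx : IsPathLiftOn f γ x₀ t x) (hrt : r ≤ t) : IsPathLiftOn f γ x₀ r x :=
  ⟨hx.continuousOn.mono (Icc_subset_Icc_right hrt), hx.apply_zero,
    hx.eqOn.mono (Icc_subset_Icc_right hrt)⟩

theorem const (h : EqOn (fun _ => f x₀) γ (Icc 0 t)) : IsPathLiftOn f γ x₀ t fun _ => x₀ :=
  ⟨continuousOn_const, rfl, h⟩

variable [TopologicalSpace F]

theorem eqOn_of_isLocalHomeomorph [T2Space E] (hf : IsLocalHomeomorph f) (ht : 0 ≤ t)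
    (hx : IsPathLiftOn f γ x₀ t x) (hx' : IsPathLiftOn f γ x₀ t x') : EqOn x x' (Icc 0 t) :=
  (T2Space.isSeparatedMap f).eqOn_of_comp_eqOn hf.isLocallyInjective isPreconnected_Icc
    hx.continuousOn hx'.continuousOn (hx.eqOn.trans hx'.eqOn.symm) (left_mem_Icc.2 ht)
    (hx.apply_zero.trans hx'.apply_zero.symm)

theorem extend (hx : IsPathLiftOn f γ x₀ t x) (ht : 0 ≤ t) (htr : t ≤ r)
    (e : OpenPartialHomeomorph E F) (he : ⇑e = f) (hxt : x t ∈ e.source)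
    (hγ : ContinuousOn γ (Icc t r)) (hγe : MapsTo γ (Icc t r) e.target) :
    ∃ x', IsPathLiftOn f γ x₀ r x' := by
  subst he
  have hxt' : e.symm (γ t) = x t := by
    rw [← hx.eqOn (right_mem_Icc.2 ht), Function.comp_apply, e.left_inv hxt]
  refine ⟨fun s => if s ≤ t then x s else e.symm (γ s), ⟨?_, ?_, ?_⟩⟩
  · rw [← Icc_union_Icc_eq_Icc ht htr]
    refine ContinuousOn.union_of_isClosed ?_ ?_ isClosed_Icc isClosed_Icc
    · exact hx.continuousOn.congr fun s hs => if_pos hs.2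
    · refine (e.continuousOn_symm.comp hγ hγe).congr fun s hs => ?_
      rcases hs.1.eq_or_lt with rfl | hts
      · simp [hxt']
      · simp [not_le.2 hts]
  · simpa [ht] using hx.apply_zero
  · intro s hs
    by_cases hst : s ≤ t
    · simpa [hst] using hx.eqOn ⟨hs.1, hst⟩
    · simpa [hst] using e.right_inv (hγe ⟨(not_le.1 hst).le, hs.2⟩)

end IsPathLiftOn

end PathLift

theorem exists_isPathLiftOn_one {E F : Type*} [MetricSpace E] [CompleteSpace E]
    [TopologicalSpace F] [T2Space F] {f : E → F} {γ : ℝ → F} {x₀ : E} {K : ℝ≥0}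
    (hf : IsLocalHomeomorph f) (hγ : Continuous γ) (h₀ : f x₀ = γ 0)
    (hK : ∀ t x, IsPathLiftOn f γ x₀ t x → LipschitzOnWith K x (Icc 0 t)) :
    ∃ x, IsPathLiftOn f γ x₀ 1 x := by
  set A := {t ∈ Icc (0 : ℝ) 1 | ∃ x, IsPathLiftOn f γ x₀ t x}
  have h0A : (0 : ℝ) ∈ A :=
    ⟨left_mem_Icc.2 zero_le_one, _, .const <| by rw [Icc_self, eqOn_singleton]; exact h₀⟩
  have hA : BddAbove A := ⟨1, fun t ht => ht.1.2⟩
  set T := sSup A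
  obtain ⟨ts, hts_mono, hts, htsA⟩ := exists_seq_tendsto_sSup ⟨0, h0A⟩ hA
  have hts0 (n : ℕ) : 0 ≤ ts n := (htsA n).1.1
  choose xs hxs using fun n => (htsA n).2
  have hdist (m n : ℕ) : dist (xs m (ts m)) (xs n (ts n)) ≤ K * dist (ts m) (ts n) := by
    wlog hmn : m ≤ n generalizing m n
    · rw [dist_comm, dist_comm (ts m)]
      exact this n m (le_of_not_ge hmn)
    have hxn := (hxs n).mono (hts_mono hmn)
    rw [(hxs m).eqOn_of_isLocalHomeomorph hf (hts0 m) hxn (right_mem_Icc.2 (hts0 m))]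
    exact (hK _ _ (hxs n)).dist_le_mul _ ⟨hts0 m, hts_mono hmn⟩ _ (right_mem_Icc.2 (hts0 n))
  obtain ⟨p, hp⟩ := cauchySeq_tendsto_of_complete
    (cauchySeq_of_dist_le_mul_dist hdist hts.cauchySeq)
  have hfp : f p = γ T := by
    refine tendsto_nhds_unique ((hf.continuous.tendsto p).comp hp) ?_
    refine ((hγ.tendsto T).comp hts).congr fun n => ?_
    exact ((hxs n).eqOn (right_mem_Icc.2 (hts0 n))).symm
  obtain ⟨e, hpe, rfl⟩ := hf p
  obtain ⟨ε, hε, hεe⟩ := Metric.isOpen_iff.1 (e.open_target.preimage hγ) T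
    (by rw [mem_preimage, ← hfp]; exact e.map_source hpe)
  obtain ⟨N, hN, hTN⟩ := ((hp.eventually (e.open_source.mem_nhds hpe)).and
    (hts.eventually (Ioi_mem_nhds (sub_lt_self T hε)))).exists
  set r := min 1 (T + ε / 2)
  have hT : T ≤ 1 := csSup_le ⟨0, h0A⟩ fun t ht => ht.1.2
  have htr : ts N ≤ r := le_min (hT.trans' (le_csSup hA (htsA N)))
    ((le_csSup hA (htsA N)).trans (by linarith))
  obtain ⟨x, hx⟩ := (hxs N).extend (hts0 N) htr e rfl hN hγ.continuousOn fun s hs =>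
    hεe <| by
      rw [mem_ball, Real.dist_eq, abs_lt]
      constructor <;> linarith [hs.1, hs.2.trans (min_le_right _ _), hTN]
  have hrT : r ≤ T := le_csSup hA ⟨⟨(hts0 N).trans htr, min_le_left _ _⟩, x, hx⟩
  have hr : r = 1 := (min_choice 1 (T + ε / 2)).resolve_right fun h => by linarith
  exact ⟨x, hr ▸ hx⟩

theorem IsLocalHomeomorph.continuous_isPathLiftOn_one {E F A : Type*} [TopologicalSpace E]
    [T2Space E] [TopologicalSpace F] [TopologicalSpace A] {f : E → F}
    (hf : IsLocalHomeomorph f) {Γ : A → ℝ → F} (hΓ : Continuous fun p : ℝ × A => Γ p.2 p.1)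
    {x₀ : A → E} (hx₀ : Continuous x₀) {L : A → ℝ → E}
    (hL : ∀ a, IsPathLiftOn f (Γ a) (x₀ a) 1 (L a)) : Continuous fun a => L a 1 := by
  let H : C(unitInterval × A, F) :=
    ⟨fun p => Γ p.2 p.1, hΓ.comp (continuous_subtype_val.prodMap continuous_id)⟩
  have hLH : f ∘ (fun p : unitInterval × A => L p.2 p.1) = H :=
    funext fun p => (hL p.2).eqOn p.1.2
  have hcont := hf.continuous_lift (T2Space.isSeparatedMap f) H hLH
    (hx₀.congr fun a => (hL a).apply_zero.symm)
    (fun a => (hL a).continuousOn.comp_continuous continuous_subtype_val fun t => t.2)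
  exact hcont.comp (Continuous.prodMk_right 1)

theorem exists_isPathLiftOn_smul {E F : Type*} [NormedAddCommGroup E] [NormedSpace ℝ E]
    [CompleteSpace E] [NormedAddCommGroup F] [NormedSpace ℝ F]
    {f : E → F} {φ : E → E ≃L[ℝ] F} {M : ℝ}
    (hf : ∀ x, HasStrictFDerivAt f (φ x : E →L[ℝ] F) x)
    (hbound : ∀ x, ‖((φ x).symm : F →L[ℝ] E)‖ ≤ M) {x₀ : E} (hx₀ : f x₀ = 0) (y : F) :
    ∃ x, IsPathLiftOn f (fun s => s • y) x₀ 1 x := by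
  refine exists_isPathLiftOn_one (K := M.toNNReal * ‖y‖₊)
    (isLocalHomeomorph_of_hasStrictFDerivAt hf) (by fun_prop) (by simp [hx₀]) fun t x hx => ?_
  refine lipschitzOnWith_of_comp_eqOn (convex_Icc 0 t) hx.continuousOn hx.eqOn
    (fun a _ => (hf (x a)).hasFDerivAt)
    (fun a _ => ((hasFDerivAt_id a).smul_const y).hasFDerivWithinAt) (fun a _ => ?_)
    (fun a _ => ?_)
  · rw [← NNReal.coe_le_coe, Real.coe_toNNReal']
    exact le_max_of_le_left (hbound _)
  · rw [ContinuousLinearMap.nnnorm_smulRight_apply, ContinuousLinearMap.nnnorm_id, one_mul]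

theorem hadamard_right_inverse_on_compact_zero_general
    {X : Type*} [NormedAddCommGroup X] [NormedSpace ℝ X] [CompleteSpace X]
    (f : X → X) (φ : X → X ≃L[ℝ] X) (M : ℝ)
    (hdf : ∀ x, HasFDerivAt f (φ x : X →L[ℝ] X) x)
    (hcont : Continuous fun x => (φ x : X →L[ℝ] X))
    (hbound : ∀ x, ‖((φ x).symm : X →L[ℝ] X)‖ ≤ M)
    (K : Set X) (hf0 : f 0 = 0) :
    ∃ g : X → X, ContinuousOn g K ∧ (∀ y ∈ K, f (g y) = y) ∧ g 0 = 0 := by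
  have hst (x : X) : HasStrictFDerivAt f (φ x : X →L[ℝ] X) x :=
    hasStrictFDerivAt_of_hasFDerivAt_of_continuousAt (.of_forall hdf) hcont.continuousAt
  have hf := isLocalHomeomorph_of_hasStrictFDerivAt hst
  choose L hL using exists_isPathLiftOn_smul hst hbound hf0
  have hg : Continuous fun y => L y 1 :=
    hf.continuous_isPathLiftOn_one (by fun_prop) continuous_const hL
  refine ⟨fun y => L y 1, hg.continuousOn, fun y _ => ?_, ?_⟩
  · simpa using (hL y).eqOn (right_mem_Icc.2 zero_le_one)
  · exact (hL 0).eqOn_of_isLocalHomeomorph hf zero_le_one (.const fun s _ => by simp [hf0])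
      (right_mem_Icc.2 zero_le_one)

/-- Under Hadamard's hypotheses, if `f 0 = 0` and `0 ∈ K` with `K` compact,
then `f` has a continuous right inverse `g` on `K` with `g 0 = 0`. -/
theorem hadamard_right_inverse_on_compact_zero
    {X : Type*} [NormedAddCommGroup X] [NormedSpace ℝ X] [CompleteSpace X]
    (f : X → X) (φ : X → X ≃L[ℝ] X) (M : ℝ) (hM : 0 < M)
    (hdf : ∀ x, HasFDerivAt f (φ x : X →L[ℝ] X) x)
    (hcont : Continuous fun x => (φ x : X →L[ℝ] X))
    (hbound : ∀ x, ‖((φ x).symm : X →L[ℝ] X)‖ ≤ M)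
    (K : Set X) (hK : IsCompact K) (hf0 : f 0 = 0) (h0K : (0 : X) ∈ K) :
    ∃ g : X → X, ContinuousOn g K ∧ (∀ y ∈ K, f (g y) = y) ∧ g 0 = 0 :=
  hadamard_right_inverse_on_compact_zero_general f φ M hdf hcont hbound K hf0
end

section
/- Let X be a Banach space and let μ : X → ℝ⁺ ∪ {∞} be a lower semicontinuous function with nonnegative values. Suppose that for some r > 0 the following holds: for every x ∈ X with 0 < μ(x) < ∞ there exists y ∈ X such that μ(y) < μ(x) − r·‖y − x‖. Then for every x ∈ X with μ(x) < ∞ there exists y ∈ X such that μ(y) = 0 and r·‖y − x‖ ≤ μ(x). -/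
/-!
Call `{b | μ b + c · d(b, a) ≤ μ a}` the descent set of `a`; descent sets are closed and nested along
descents. Starting from `x`, pick successively a point of the current descent set whose value is
within `2⁻ⁿ` of the infimum of `μ` on it. The distances travelled are paid for by the decrease of
`μ`, so their sum is at most `μ x` and the sequence is Cauchy. Its limit lies in every descent set
of the sequence, and by the choice of the points nothing in its own descent set has a smaller
value. The decrease hypothesis then forces `μ = 0` at the limit.
-/

open Filter Topology ENNReal NNReal

section DescentSet

variable {X : Type*} [PseudoEMetricSpace X] (μ : X → ℝ≥0∞) (c : ℝ≥0)

def descentSet (a : X) : Set X := {b | μ b + c * edist b a ≤ μ a}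

variable {μ c}

theorem mem_descentSet {a b : X} : b ∈ descentSet μ c a ↔ μ b + c * edist b a ≤ μ a := Iff.rfl

theorem self_mem_descentSet (a : X) : a ∈ descentSet μ c a := by
  simp [mem_descentSet]

theorem descentSet_subset {a b : X} (hb : b ∈ descentSet μ c a) :
    descentSet μ c b ⊆ descentSet μ c a := fun z hz =>
  calc μ z + c * edist z a
      ≤ μ z + (c * edist z b + c * edist b a) := by
        rw [← mul_add]; gcongr; exact edist_triangle z b a
    _ = (μ z + c * edist z b) + c * edist b a := by ring
    _ ≤ μ b + c * edist b a := by gcongr; exact hz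
    _ ≤ μ a := hb

theorem le_of_mem_descentSet {a b : X} (hb : b ∈ descentSet μ c a) : μ b ≤ μ a :=
  le_self_add.trans hb

theorem isClosed_descentSet (hμ : LowerSemicontinuous μ) (a : X) :
    IsClosed (descentSet μ c a) := by
  have hdist : Continuous fun b => (c : ℝ≥0∞) * edist b a :=
    (ENNReal.continuous_const_mul coe_ne_top).comp (continuous_id.edist continuous_const)
  exact (hμ.add hdist.lowerSemicontinuous).isClosed_preimage (μ a)

theorem exists_mem_descentSet_le_iInf_add (a : X) {ε : ℝ≥0∞} (hε : ε ≠ 0) :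
    ∃ b ∈ descentSet μ c a, μ b ≤ (⨅ z ∈ descentSet μ c a, μ z) + ε := by
  by_cases htop : (⨅ z ∈ descentSet μ c a, μ z) = ⊤
  · exact ⟨a, self_mem_descentSet a, by simp [htop]⟩
  · obtain ⟨b, hlt⟩ := iInf_lt_iff.mp (ENNReal.lt_add_right htop hε)
    obtain ⟨hb, hlt⟩ := iInf_lt_iff.mp hlt
    exact ⟨b, hb, hlt.le⟩

section Chain

variable {u : ℕ → X} (hu : ∀ n, u (n + 1) ∈ descentSet μ c (u n))
include hu

theorem sum_mul_edist_add_le_of_chain (n : ℕ) :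
    ∑ k ∈ Finset.range n, c * edist (u (k + 1)) (u k) + μ (u n) ≤ μ (u 0) := by
  induction n with
  | zero => simp
  | succ n ih =>
    calc ∑ k ∈ Finset.range (n + 1), c * edist (u (k + 1)) (u k) + μ (u (n + 1))
        = ∑ k ∈ Finset.range n, c * edist (u (k + 1)) (u k)
            + (μ (u (n + 1)) + c * edist (u (n + 1)) (u n)) := by
          rw [Finset.sum_range_succ]; ring
      _ ≤ ∑ k ∈ Finset.range n, c * edist (u (k + 1)) (u k) + μ (u n) := by gcongr; exact hu n
      _ ≤ μ (u 0) := ih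

theorem cauchySeq_of_chain (hc : c ≠ 0) (h0 : μ (u 0) ≠ ⊤) : CauchySeq u := by
  have hsum : ∑' k, c * edist (u (k + 1)) (u k) ≤ μ (u 0) :=
    ENNReal.tsum_le_of_sum_range_le fun n => le_self_add.trans (sum_mul_edist_add_le_of_chain hu n)
  have hfin : ∑' k, edist (u (k + 1)) (u k) ≠ ⊤ := by
    rw [ENNReal.tsum_mul_left] at hsum
    exact (ENNReal.lt_top_of_mul_ne_top_right (hsum.trans_lt h0.lt_top).ne (coe_ne_zero.mpr hc)).ne
  exact cauchySeq_of_edist_le_of_tsum_ne_top _ (fun n => (edist_comm _ _).le) hfin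

theorem mem_descentSet_of_chain {n m : ℕ} (hnm : n ≤ m) : u m ∈ descentSet μ c (u n) := by
  induction m, hnm using Nat.le_induction with
  | base => exact self_mem_descentSet _
  | succ m _ ih => exact descentSet_subset ih (hu m)

theorem mem_descentSet_of_tendsto_chain (hμ : LowerSemicontinuous μ) {y : X}
    (hy : Tendsto u atTop (𝓝 y)) (n : ℕ) : y ∈ descentSet μ c (u n) :=
  (isClosed_descentSet hμ _).mem_of_tendsto hy
    (eventually_atTop.mpr ⟨n, fun _ hm => mem_descentSet_of_chain hu hm⟩)

end Chain

/-- The weak form of Ekeland's variational principle. -/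
theorem exists_mem_descentSet_forall_le [CompleteSpace X] (hμ : LowerSemicontinuous μ)
    (hc : c ≠ 0) {x : X} (hx : μ x ≠ ⊤) :
    ∃ y ∈ descentSet μ c x, ∀ z ∈ descentSet μ c y, μ y ≤ μ z := by
  choose next hnext hnext_le using fun (a : X) (n : ℕ) =>
    exists_mem_descentSet_le_iInf_add (μ := μ) (c := c) a
      (ENNReal.pow_ne_zero (ENNReal.inv_ne_zero.mpr ofNat_ne_top) n : (2⁻¹ : ℝ≥0∞) ^ n ≠ 0)
  let u : ℕ → X := fun n => Nat.rec x (fun k a => next a k) n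
  have hu : ∀ n, u (n + 1) ∈ descentSet μ c (u n) := fun n => hnext (u n) n
  obtain ⟨y, hy⟩ := cauchySeq_tendsto_of_complete (cauchySeq_of_chain hu hc hx)
  have hyu := mem_descentSet_of_tendsto_chain hu hμ hy
  refine ⟨y, hyu 0, fun z hz => ENNReal.le_of_forall_pos_le_add fun ε hε _ => ?_⟩
  obtain ⟨n, hn⟩ := ENNReal.exists_inv_two_pow_lt (coe_ne_zero.mpr hε.ne')
  calc μ y ≤ μ (u (n + 1)) := le_of_mem_descentSet (hyu (n + 1))
    _ ≤ (⨅ w ∈ descentSet μ c (u n), μ w) + 2⁻¹ ^ n := hnext_le (u n) n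
    _ ≤ μ z + ε := add_le_add (biInf_le _ (descentSet_subset (hyu n) hz)) hn.le

end DescentSet

theorem ofReal_mul_norm_sub_eq {E : Type*} [SeminormedAddCommGroup E] {r : ℝ} (hr : 0 ≤ r)
    (x y : E) : ENNReal.ofReal (r * ‖y - x‖) = r.toNNReal * edist y x := by
  rw [edist_dist, dist_eq_norm, ENNReal.ofReal_mul hr]
  rfl

open ENNReal in
theorem decrease_principle_general
    {X : Type*} [NormedAddCommGroup X] [CompleteSpace X]
    (μ : X → ℝ≥0∞) (hlsc : LowerSemicontinuous μ) (r : ℝ) (hr : 0 < r)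
    (hdec : ∀ x, 0 < μ x → μ x < ⊤ →
      ∃ y, μ y + ENNReal.ofReal (r * ‖y - x‖) < μ x) :
    ∀ x, μ x < ⊤ → ∃ y, μ y = 0 ∧ ENNReal.ofReal (r * ‖y - x‖) ≤ μ x := by
  intro x hx
  simp only [ofReal_mul_norm_sub_eq hr.le] at hdec ⊢
  obtain ⟨y, hyx, hmin⟩ :=
    exists_mem_descentSet_forall_le hlsc (Real.toNNReal_pos.mpr hr).ne' hx.ne
  have hy0 : μ y = 0 := by
    by_contra hy
    obtain ⟨z, hz⟩ := hdec y (pos_iff_ne_zero.mpr hy) ((le_of_mem_descentSet hyx).trans_lt hx)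
    exact (le_self_add.trans_lt hz).not_ge (hmin z hz.le)
  exact ⟨y, hy0, le_add_self.trans hyx⟩

open ENNReal in
/-- A precursor to Ekeland's variational principle: if the lower semicontinuous
function `μ : X → [0, ∞]` can be strictly decreased at rate `r` at every point
where it is finite and positive, then from every point `x` of its domain one
can reach a zero of `μ` within distance `μ x / r`. -/
theorem decrease_principle
    {X : Type*} [NormedAddCommGroup X] [NormedSpace ℝ X] [CompleteSpace X]
    (μ : X → ℝ≥0∞) (hlsc : LowerSemicontinuous μ) (r : ℝ) (hr : 0 < r)
    (hdec : ∀ x, 0 < μ x → μ x < ⊤ →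
      ∃ y, μ y + ENNReal.ofReal (r * ‖y - x‖) < μ x) :
    ∀ x, μ x < ⊤ → ∃ y, μ y = 0 ∧ ENNReal.ofReal (r * ‖y - x‖) ≤ μ x :=
  decrease_principle_general μ hlsc r hr hdec
end

section
/- Let X be a Banach space and let f : X → X be continuously (Fréchet) differentiable with f'(x) invertible for all x ∈ X and ‖[f'(x)]⁻¹‖ ≤ M for all x ∈ X, for some M > 0. Let K ⊆ X be a nonempty compact set and define μ(g) = max_{y∈K} ‖f(g(y)) − y‖ for continuous g : K → X. Then for every continuous ĝ : K → X with μ(ĝ) > 0 there exists a continuous g : K → X, g ≠ ĝ, such that μ(g) < μ(ĝ) − (1/(2M)) · max_{y∈K} ‖g(y) − ĝ(y)‖. -/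
/-! The damped Newton step `g = ĝ - t • f'(ĝ)⁻¹ (f ∘ ĝ - id)` with small `t > 0` works. Along the
step the residual shrinks linearly, `f (g y) - y ≈ (1 - t) (f (ĝ y) - y)`, and by uniform
continuity of `f'` near the compact set `ĝ(K)` the linearization error is at most
`ε t ‖f'(ĝ y)⁻¹ (f (ĝ y) - y)‖ ≤ ε t M μ(ĝ)`. With `ε = 1 / (4M)` this gives
`μ(g) ≤ μ(ĝ) - (3/4) t μ(ĝ)`, while `‖g - ĝ‖∞ ≤ t M μ(ĝ)`. -/

open Metric Filter Topology

/-- A uniform bound on the inverses makes inversion Lipschitz, via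
`B⁻¹ - A⁻¹ = B⁻¹ (A - B) A⁻¹`. -/
theorem ContinuousLinearEquiv.continuous_symm_of_norm_symm_le {α 𝕜 E F : Type*}
    [TopologicalSpace α] [NontriviallyNormedField 𝕜] [NormedAddCommGroup E] [NormedSpace 𝕜 E]
    [NormedAddCommGroup F] [NormedSpace 𝕜 F] {φ : α → E ≃L[𝕜] F} {M : ℝ}
    (hφ : Continuous fun a => (φ a : E →L[𝕜] F))
    (hM : ∀ a, ‖((φ a).symm : F →L[𝕜] E)‖ ≤ M) :
    Continuous fun a => ((φ a).symm : F →L[𝕜] E) := by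
  refine continuous_iff_continuousAt.2 fun a => tendsto_iff_norm_sub_tendsto_zero.2 ?_
  have hdiff := (tendsto_iff_norm_sub_tendsto_zero.1 (hφ.tendsto a)).const_mul (M * M)
  rw [mul_zero] at hdiff
  refine squeeze_zero (fun _ => norm_nonneg _) (fun b => ?_) hdiff
  set A : E →L[𝕜] F := (φ a : E →L[𝕜] F)
  set B : E →L[𝕜] F := (φ b : E →L[𝕜] F)
  have hres : ((φ b).symm : F →L[𝕜] E) - (φ a).symm
      = ((φ b).symm : F →L[𝕜] E) ∘L (A - B) ∘L ((φ a).symm : F →L[𝕜] E) := by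
    ext x; simp [A, B]
  calc ‖((φ b).symm : F →L[𝕜] E) - (φ a).symm‖
      ≤ ‖((φ b).symm : F →L[𝕜] E)‖ * (‖A - B‖ * ‖((φ a).symm : F →L[𝕜] E)‖) := by
        rw [hres]
        exact (ContinuousLinearMap.opNorm_comp_le _ _).trans
          (mul_le_mul_of_nonneg_left (ContinuousLinearMap.opNorm_comp_le _ _) (norm_nonneg _))
    _ ≤ M * (‖A - B‖ * M) := by
      have hM0 : 0 ≤ M := (norm_nonneg _).trans (hM a)
      gcongr
      exacts [hM b, hM a]
    _ = M * M * ‖B - A‖ := by rw [norm_sub_rev]; ring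

theorem IsCompact.exists_forall_dist_lt_of_continuousAt {α β : Type*} [PseudoMetricSpace α]
    [PseudoMetricSpace β] {s : Set α} (hs : IsCompact s) {f : α → β}
    (hf : ∀ x ∈ s, ContinuousAt f x) {ε : ℝ} (hε : 0 < ε) :
    ∃ δ > 0, ∀ x ∈ s, ∀ z, dist x z < δ → dist (f x) (f z) < ε := by
  obtain ⟨δ, hδ, hδε⟩ := Metric.mem_uniformity_dist.1
    (hs.uniformContinuousAt_of_continuousAt f hf (Metric.dist_mem_uniformity hε))
  exact ⟨δ, hδ, fun x hx z hxz => hδε hxz hx⟩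

theorem norm_sub_sub_smul_le {E F : Type*} [NormedAddCommGroup E] [NormedSpace ℝ E]
    [NormedAddCommGroup F] [NormedSpace ℝ F] {f : E → F} {f' : E → E →L[ℝ] F}
    {x v : E} {y : F} {t δ ε : ℝ}
    (hf : ∀ z ∈ ball x δ, HasFDerivAt f (f' z) z) (hf' : ∀ z ∈ ball x δ, ‖f' z - f' x‖ ≤ ε)
    (hv : f' x v = f x - y) (ht₀ : 0 ≤ t) (ht₁ : t ≤ 1) (htv : t * ‖v‖ < δ) :
    ‖f (x - t • v) - y‖ ≤ (1 - t) * ‖f x - y‖ + ε * (t * ‖v‖) := by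
  have hstep : x - t • v ∈ ball x δ := by
    rwa [mem_ball, dist_eq_norm, sub_sub_cancel_left, norm_neg, norm_smul,
      Real.norm_of_nonneg ht₀]
  have hlin : ‖f (x - t • v) - f x - f' x (-(t • v))‖ ≤ ε * (t * ‖v‖) := by
    have := (convex_ball x δ).norm_image_sub_le_of_norm_hasFDerivWithin_le'
      (fun z hz => (hf z hz).hasFDerivWithinAt) hf'
      (mem_ball_self (hstep.out.trans_le' dist_nonneg)) hstep
    rwa [sub_sub_cancel_left, norm_neg, norm_smul, Real.norm_of_nonneg ht₀] at this
  have hsplit : f (x - t • v) - y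
      = (f (x - t • v) - f x - f' x (-(t • v))) + (1 - t) • (f x - y) := by
    rw [map_neg, map_smul, hv, sub_smul, one_smul]
    abel
  calc ‖f (x - t • v) - y‖
      ≤ ‖f (x - t • v) - f x - f' x (-(t • v))‖ + ‖(1 - t) • (f x - y)‖ := by
        rw [hsplit]; exact norm_add_le _ _
    _ ≤ ε * (t * ‖v‖) + (1 - t) * ‖f x - y‖ := by
        rw [norm_smul, Real.norm_of_nonneg (sub_nonneg.2 ht₁)]
        exact add_le_add_left hlin _
    _ = (1 - t) * ‖f x - y‖ + ε * (t * ‖v‖) := add_comm _ _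

theorem IsCompact.exists_forall_norm_sub_sub_smul_le {E F : Type*} [NormedAddCommGroup E]
    [NormedSpace ℝ E] [NormedAddCommGroup F] [NormedSpace ℝ F] {f : E → F} {f' : E → E →L[ℝ] F}
    (hf : ∀ x, HasFDerivAt f (f' x) x) (hf' : Continuous f') {S : Set E} (hS : IsCompact S)
    {ε : ℝ} (hε : 0 < ε) (C : ℝ) :
    ∃ t, 0 < t ∧ t < 1 ∧ ∀ x ∈ S, ∀ v y, f' x v = f x - y → ‖v‖ ≤ C →
      ‖f (x - t • v) - y‖ ≤ (1 - t) * ‖f x - y‖ + ε * (t * ‖v‖) := by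
  obtain ⟨δ, hδ, hf'δ⟩ := hS.exists_forall_dist_lt_of_continuousAt
    (fun x _ => hf'.continuousAt) hε
  obtain ⟨t, htδ, ht₀, ht₁⟩ : ∃ t, t * C < δ ∧ 0 < t ∧ t < 1 :=
    ((((continuous_id.mul continuous_const).tendsto' 0 0 (zero_mul C)).mono_left
      nhdsWithin_le_nhds).eventually (gt_mem_nhds hδ)).and (Ioo_mem_nhdsGT one_pos) |>.exists
  refine ⟨t, ht₀, ht₁, fun x hx v y hv hvC => ?_⟩
  refine norm_sub_sub_smul_le (fun z _ => hf z) (fun z hz => ?_) hv ht₀.le ht₁.le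
    ((mul_le_mul_of_nonneg_left hvC ht₀.le).trans_lt htδ)
  rw [← dist_eq_norm, dist_comm]
  exact (hf'δ x hx z (by rwa [dist_comm])).le

theorem mu_decrease_step_general
    {X : Type*} [NormedAddCommGroup X] [NormedSpace ℝ X]
    (f : X → X) (φ : X → X ≃L[ℝ] X) (M : ℝ) (hM : 0 < M)
    (hdf : ∀ x, HasFDerivAt f (φ x : X →L[ℝ] X) x)
    (hcont : Continuous fun x => (φ x : X →L[ℝ] X))
    (hbound : ∀ x, ‖((φ x).symm : X →L[ℝ] X)‖ ≤ M)
    (K : Set X) (hK : IsCompact K) (hKne : K.Nonempty)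
    (ghat : X → X) (hghat : ContinuousOn ghat K)
    (hpos : 0 < sSup ((fun y => ‖f (ghat y) - y‖) '' K)) :
    ∃ g : X → X, ContinuousOn g K ∧ (∃ y ∈ K, g y ≠ ghat y) ∧
      sSup ((fun y => ‖f (g y) - y‖) '' K) <
        sSup ((fun y => ‖f (ghat y) - y‖) '' K)
          - (1 / (2 * M)) * sSup ((fun y => ‖g y - ghat y‖) '' K) := by
  set μ := sSup ((fun y => ‖f (ghat y) - y‖) '' K)
  have hres : ContinuousOn (fun y => f (ghat y) - y) K :=
    ((continuous_iff_continuousAt.2 fun x => (hdf x).continuousAt).comp_continuousOn hghat).sub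
      continuousOn_id
  have hres_le : ∀ y ∈ K, ‖f (ghat y) - y‖ ≤ μ := fun y hy =>
    le_csSup (hK.bddAbove_image hres.norm) ⟨y, hy, rfl⟩
  set v : X → X := fun y => ((φ (ghat y)).symm : X →L[ℝ] X) (f (ghat y) - y)
  have hv : ContinuousOn v K :=
    ((ContinuousLinearEquiv.continuous_symm_of_norm_symm_le hcont hbound).comp_continuousOn
      hghat).clm_apply hres
  have hv_le : ∀ y ∈ K, ‖v y‖ ≤ M * μ := fun y hy =>
    ((φ (ghat y)).symm : X →L[ℝ] X).le_of_opNorm_le (hbound _) _ |>.trans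
      (mul_le_mul_of_nonneg_left (hres_le y hy) hM.le)
  obtain ⟨t, ht₀, ht₁, hstep⟩ := (hK.image_of_continuousOn hghat).exists_forall_norm_sub_sub_smul_le
    hdf hcont (by positivity : 0 < 1 / (4 * M)) (M * μ)
  set g : X → X := fun y => ghat y - t • v y
  have hstep_le : ∀ y ∈ K, ‖f (g y) - y‖ ≤ (1 - t) * μ + 1 / (4 * M) * (t * (M * μ)) :=
    fun y hy => (hstep _ ⟨y, hy, rfl⟩ _ y ((φ (ghat y)).apply_symm_apply _) (hv_le y hy)).trans
      (by gcongr; exacts [hres_le y hy, hv_le y hy])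
  have hdisp_le : ∀ y ∈ K, ‖g y - ghat y‖ ≤ t * (M * μ) := fun y hy => by
    rw [sub_sub_cancel_left, norm_neg, norm_smul, Real.norm_of_nonneg ht₀.le]
    exact mul_le_mul_of_nonneg_left (hv_le y hy) ht₀.le
  obtain ⟨y₀, hy₀, hy₀μ⟩ := hK.exists_sSup_image_eq hKne hres.norm
  refine ⟨g, hghat.sub (continuousOn_const.smul hv), ⟨y₀, hy₀, fun hg => ?_⟩, ?_⟩
  · have hv₀ : v y₀ = 0 := (smul_eq_zero.1 (sub_eq_self.1 hg)).resolve_left ht₀.ne'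
    have : f (ghat y₀) - y₀ = 0 := by simpa [v] using congrArg (φ (ghat y₀)) hv₀
    exact hpos.ne' (hy₀μ.trans (by rw [this, norm_zero]))
  · have hnew := csSup_le (hKne.image _) (Set.forall_mem_image.2 hstep_le)
    have hdisp := csSup_le (hKne.image _) (Set.forall_mem_image.2 hdisp_le)
    have hdisp' : 1 / (2 * M) * sSup ((fun y => ‖g y - ghat y‖) '' K) ≤ t * μ / 2 :=
      (mul_le_mul_of_nonneg_left hdisp (by positivity)).trans_eq (by field_simp)
    have hlin : 1 / (4 * M) * (t * (M * μ)) = t * μ / 4 := by field_simp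
    linarith [mul_pos ht₀ hpos]

/-- Key decrease step in the Ekeland–Séré scheme: under Hadamard's hypotheses,
with `μ g = max_{y∈K} ‖f (g y) - y‖` on continuous maps on a nonempty compact
`K`, every `ghat` with `μ ghat > 0` admits a continuous `g ≠ ghat` with
`μ g < μ ghat - (1/(2M)) · max_{y∈K} ‖g y - ghat y‖`. -/
theorem mu_decrease_step
    {X : Type*} [NormedAddCommGroup X] [NormedSpace ℝ X] [CompleteSpace X]
    (f : X → X) (φ : X → X ≃L[ℝ] X) (M : ℝ) (hM : 0 < M)
    (hdf : ∀ x, HasFDerivAt f (φ x : X →L[ℝ] X) x)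
    (hcont : Continuous fun x => (φ x : X →L[ℝ] X))
    (hbound : ∀ x, ‖((φ x).symm : X →L[ℝ] X)‖ ≤ M)
    (K : Set X) (hK : IsCompact K) (hKne : K.Nonempty)
    (ghat : X → X) (hghat : ContinuousOn ghat K)
    (hpos : 0 < sSup ((fun y => ‖f (ghat y) - y‖) '' K)) :
    ∃ g : X → X, ContinuousOn g K ∧ (∃ y ∈ K, g y ≠ ghat y) ∧
      sSup ((fun y => ‖f (g y) - y‖) '' K) <
        sSup ((fun y => ‖f (ghat y) - y‖) '' K)
          - (1 / (2 * M)) * sSup ((fun y => ‖g y - ghat y‖) '' K) :=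
  mu_decrease_step_general f φ M hM hdf hcont hbound K hK hKne ghat hghat hpos
end
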